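/- arXiv:math/0307399 — 7 statements merged into one kernel-verified Lean document; each statement's English description precedes it below -/
import Mathlib

section
/- If X is a closed permutation class such that al(X) = ∞ (i.e., X contains, among its elements or their inverses, arbitrarily long alternating permutations), then |X ∩ S_n| ≥ 2^{n-1} for every n ≥ 1. -/
/-- A finite permutation: a length `n` together with a permutation of `{1,…,n}`
(modelled as `Fin n`). -/
def PermSeq : Type := Σ n : ℕ, Equiv.Perm (Fin n)

/-- `PermContains π ρ` : the permutation `π` is contained in `ρ` (written `π ≺ ρ`),
i.e. `ρ`, viewed as a sequence, has a subsequence order-isomorphic to `π`. -/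
def PermContains {m n : ℕ} (π : Equiv.Perm (Fin m)) (ρ : Equiv.Perm (Fin n)) : Prop :=
  ∃ f : Fin m → Fin n, StrictMono f ∧ ∀ i j : Fin m, π i < π j ↔ ρ (f i) < ρ (f j)

/-- Containment as a relation on `PermSeq`. -/
def PermLE (σ τ : PermSeq) : Prop := PermContains σ.2 τ.2

/-- A closed permutation class: downward closed under containment. -/
def IsCPC (X : Set PermSeq) : Prop := ∀ σ ∈ X, ∀ π : PermSeq, PermLE π σ → π ∈ X

/-- `countIn X n = |X ∩ S_n|`. -/
noncomputable def countIn (X : Set PermSeq) (n : ℕ) : ℕ := {π ∈ X | π.1 = n}.ncard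

/-- A permutation `σ ∈ S_n` is alternating if every value at an odd position is larger
than every value at an even position (positions are `1`-indexed, so position of
`i : Fin n` is `i.val + 1`). -/
def IsAlternating {n : ℕ} (σ : Equiv.Perm (Fin n)) : Prop :=
  ∀ i j : Fin n, Odd (i.val + 1) → Even (j.val + 1) → σ j < σ i

/-- The set of lengths of alternating permutations contained in `π` or in `π⁻¹`. -/
def alSet (π : PermSeq) : Set ℕ :=
  {m | ∃ σ : Equiv.Perm (Fin m), IsAlternating σ ∧
        (PermContains σ π.2 ∨ PermContains σ π.2⁻¹)}

/-- `al π` : the maximum length of an alternating permutation contained in `π` or `π⁻¹`. -/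
noncomputable def al (π : PermSeq) : ℕ := sSup (alSet π)

/-!
Some `π ∈ X` has an alternating permutation `σ` of length at least `2n` below `π` or `π⁻¹`
(in the second case, pass to inverses). Take the first `n` pairs of positions `(2i, 2i+1)` of
`σ` (0-indexed): every value in the first slot of a pair exceeds every value in the second slot.
For each `S ⊆ {0,…,n-1}` pick the first slot of pair `i` when `i ∈ S` and the second one
otherwise; the pattern of the chosen values is contained in `σ`. Fix a pair `k` whose first slot
holds the least of the large values. For `S ∋ k`, the set `S` is read off the pattern as the set
of positions whose value is at least that of position `k`, so these `2^(n-1)` choices of `S`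
give distinct patterns.
-/

open Finset Function Equiv

theorem PermContains.trans {a b c : ℕ} {π : Perm (Fin a)} {ρ : Perm (Fin b)}
    {τ : Perm (Fin c)} (h₁ : PermContains π ρ) (h₂ : PermContains ρ τ) : PermContains π τ := by
  obtain ⟨f, hf, hπρ⟩ := h₁
  obtain ⟨g, hg, hρτ⟩ := h₂
  exact ⟨g ∘ f, hg.comp hf, fun i j => (hπρ i j).trans (hρτ (f i) (f j))⟩

theorem PermContains.inv {m n : ℕ} {π : Perm (Fin m)} {ρ : Perm (Fin n)}
    (h : PermContains π ρ) : PermContains π⁻¹ ρ⁻¹ := by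
  obtain ⟨f, hf, hπρ⟩ := h
  refine ⟨fun j => ρ (f (π⁻¹ j)), fun i j hij => (hπρ _ _).1 (by simpa using hij), fun i j => ?_⟩
  simpa using hf.lt_iff_lt.symm

section Pattern

variable {α : Type*} [LinearOrder α] {n : ℕ}

noncomputable def pattern (w : Fin n → α) : Perm (Fin n) := (Tuple.sort w)⁻¹

theorem pattern_lt_pattern_iff {w : Fin n → α} (hw : Injective w) (i j : Fin n) :
    pattern w i < pattern w j ↔ w i < w j := by
  have hsort : StrictMono (w ∘ Tuple.sort w) :=
    (Tuple.monotone_sort w).strictMono_of_injective (hw.comp (Tuple.sort w).injective)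
  simpa [pattern] using (hsort.lt_iff_lt (a := pattern w i) (b := pattern w j)).symm

theorem pattern_le_pattern_iff {w : Fin n → α} (hw : Injective w) (i j : Fin n) :
    pattern w i ≤ pattern w j ↔ w i ≤ w j := by
  simp only [← not_lt, pattern_lt_pattern_iff hw]

theorem permContains_pattern {m : ℕ} (σ : Perm (Fin m)) {e : Fin n → Fin m}
    (he : StrictMono e) : PermContains (pattern (σ ∘ e)) σ :=
  ⟨e, he, pattern_lt_pattern_iff (σ.injective.comp he.injective)⟩

end Pattern

theorem mem_iff_piecewise_le {ι α : Type*} [DecidableEq ι] [LinearOrder α] {S : Finset ι}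
    {f g : ι → α} {k : ι} (hk : k ∈ S) (hf : ∀ i, f k ≤ f i) (hg : ∀ i, g i < f k) (i : ι) :
    i ∈ S ↔ S.piecewise f g k ≤ S.piecewise f g i := by
  rw [piecewise_eq_of_mem _ _ _ hk]
  by_cases hi : i ∈ S
  · simpa [piecewise_eq_of_mem _ _ _ hi, hi] using hf i
  · simpa [piecewise_eq_of_notMem _ _ _ hi, hi] using hg i

section AlternatingPairs

variable {m n : ℕ} (h : 2 * n ≤ m)

-- `IsAlternating` counts positions from `1`, so `oddPos h i` is the index `2 * i` of `Fin m`.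
def oddPos (i : Fin n) : Fin m := ⟨2 * i, by omega⟩

def evenPos (i : Fin n) : Fin m := ⟨2 * i + 1, by omega⟩

theorem IsAlternating.apply_evenPos_lt {σ : Perm (Fin m)} (hσ : IsAlternating σ) (i j : Fin n) :
    σ (evenPos h i) < σ (oddPos h j) :=
  hσ _ _ ⟨j, by simp [oddPos]⟩ ⟨i + 1, by simp [evenPos]; ring⟩

theorem strictMono_piecewise_oddPos_evenPos (S : Finset (Fin n)) :
    StrictMono (S.piecewise (oddPos h) (evenPos h)) := by
  intro i j hij
  rw [Fin.lt_def] at hij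
  simp only [Finset.piecewise]
  split_ifs <;> simp only [Fin.lt_def, oddPos, evenPos] <;> omega

theorem exists_finset_permContains_of_isAlternating {m n : ℕ} {σ : Perm (Fin m)}
    (hσ : IsAlternating σ) (h : 2 * n ≤ m) (hn : 1 ≤ n) :
    ∃ s : Finset (Perm (Fin n)), #s = 2 ^ (n - 1) ∧ ∀ ρ ∈ s, PermContains ρ σ := by
  have : Nonempty (Fin n) := Fin.pos_iff_nonempty.1 hn
  obtain ⟨k, hk⟩ := Finite.exists_min (σ ∘ oddPos h)
  let w (S : Finset (Fin n)) : Fin n → Fin m := σ ∘ S.piecewise (oddPos h) (evenPos h)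
  have hw (S : Finset (Fin n)) : Injective (w S) :=
    σ.injective.comp (strictMono_piecewise_oddPos_evenPos h S).injective
  have hmem {S : Finset (Fin n)} (hkS : k ∈ S) (i : Fin n) : i ∈ S ↔ w S k ≤ w S i := by
    simpa only [w, Finset.piecewise, comp_apply, apply_ite] using
      mem_iff_piecewise_le hkS hk (fun i => hσ.apply_evenPos_lt h i k) i
  have hinj : Set.InjOn (fun S => pattern (w S)) (Icc {k} univ : Finset _) := by
    intro S hS T hT hST
    have hkS : k ∈ S := singleton_subset_iff.1 (mem_Icc.1 hS).1
    have hkT : k ∈ T := singleton_subset_iff.1 (mem_Icc.1 hT).1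
    ext i
    rw [hmem hkS, hmem hkT, ← pattern_le_pattern_iff (hw S), ← pattern_le_pattern_iff (hw T),
      show pattern (w S) = pattern (w T) from hST]
  refine ⟨(Icc {k} univ).image fun S => pattern (w S), ?_, ?_⟩
  · rw [card_image_of_injOn hinj, card_Icc_finset (subset_univ _), card_univ, Fintype.card_fin,
      card_singleton]
  · simp only [mem_image]
    rintro _ ⟨S, -, rfl⟩
    exact permContains_pattern σ (strictMono_piecewise_oddPos_evenPos h S)

theorem exists_mem_alSet_le_of_le_al {π : PermSeq} {K : ℕ} (hK : 0 < K) (h : K ≤ al π) :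
    ∃ m ∈ alSet π, K ≤ m := by
  by_contra! hlt
  have : al π ≤ K - 1 := csSup_le' fun m hm => Nat.le_sub_one_of_lt (hlt m hm)
  omega

theorem card_le_countIn {X : Set PermSeq} {n : ℕ} (s : Finset (Perm (Fin n)))
    (hs : ∀ ρ ∈ s, (⟨n, ρ⟩ : PermSeq) ∈ X) : #s ≤ countIn X n := by
  have hfin : {π ∈ X | π.1 = n}.Finite :=
    (Set.finite_range fun ρ : Perm (Fin n) => (⟨n, ρ⟩ : PermSeq)).subset
      fun ⟨_, ρ⟩ ⟨_, hρ⟩ => by subst hρ; exact ⟨ρ, rfl⟩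
  rw [← Set.ncard_coe_finset,
    ← Set.ncard_image_of_injective _ (sigma_mk_injective (β := fun k => Perm (Fin k)))]
  exact Set.ncard_le_ncard (Set.image_subset_iff.2 fun ρ hρ => ⟨hs ρ hρ, rfl⟩) hfin

/-- If a closed permutation class `X` contains (among its elements or their inverses)
arbitrarily long alternating permutations, then `|X ∩ S_n| ≥ 2 ^ (n - 1)` for every `n ≥ 1`. -/
theorem count_ge_of_al_infinite (X : Set PermSeq) (hX : IsCPC X)
    (hal : ∀ K : ℕ, ∃ π ∈ X, K ≤ al π) :
    ∀ n : ℕ, 1 ≤ n → 2 ^ (n - 1) ≤ countIn X n := by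
  intro n hn
  obtain ⟨⟨N, τ⟩, hτX, hτ⟩ := hal (2 * n)
  obtain ⟨m, ⟨σ, hσ, hστ⟩, hm⟩ := exists_mem_alSet_le_of_le_al (by omega) hτ
  obtain ⟨s, hs, hsσ⟩ := exists_finset_permContains_of_isAlternating hσ hm hn
  rcases hστ with hστ | hστ
  · exact hs ▸ card_le_countIn s fun ρ hρ => hX _ hτX ⟨n, ρ⟩ ((hsσ ρ hρ).trans hστ)
  · rw [← hs, ← card_map (Equiv.inv _).toEmbedding]
    refine card_le_countIn _ fun ρ hρ => hX _ hτX ⟨n, ρ⟩ ?_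
    rw [mem_map_equiv, Equiv.inv_symm, Equiv.inv_apply] at hρ
    show PermContains ρ τ
    simpa using ((hsσ _ hρ).trans hστ).inv
end AlternatingPairs
end

section
/- For every up-indecomposable permutation π of length n > 1, there is an up-indecomposable permutation σ of length n-1 with σ ≺ π. The same holds for down-indecomposable permutations. -/
/-- The direct sum `σ ⊕ τ` of permutations: `(σ⊕τ)(i) = σ(i)` for `i` in the first block
and `(σ⊕τ)(m+i) = m + τ(i)` on the second block. -/
def permOplus {m n : ℕ} (σ : Equiv.Perm (Fin m)) (τ : Equiv.Perm (Fin n)) :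
    Equiv.Perm (Fin (m + n)) :=
  finSumFinEquiv.symm.trans ((Equiv.sumCongr σ τ).trans finSumFinEquiv)

/-- The skew sum `σ ⊖ τ` of permutations: `(σ⊖τ)(i) = n + σ(i)` for `i` in the first block
and `(σ⊖τ)(m+i) = τ(i)` on the second block. -/
def permOminus {m n : ℕ} (σ : Equiv.Perm (Fin m)) (τ : Equiv.Perm (Fin n)) :
    Equiv.Perm (Fin (m + n)) :=
  finSumFinEquiv.symm.trans ((Equiv.sumCongr σ τ).trans
    ((Equiv.sumComm (Fin m) (Fin n)).trans (finSumFinEquiv.trans (finCongr (Nat.add_comm n m)))))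

/-- Direct sum on `PermSeq`. -/
def PermSeq.oplus (σ τ : PermSeq) : PermSeq := ⟨σ.1 + τ.1, permOplus σ.2 τ.2⟩

/-- Skew sum on `PermSeq`. -/
def PermSeq.ominus (σ τ : PermSeq) : PermSeq := ⟨σ.1 + τ.1, permOminus σ.2 τ.2⟩

/-- A permutation is up-indecomposable if it is not the direct sum of two nonempty
permutations. -/
def UpIndec (π : PermSeq) : Prop :=
  ¬ ∃ σ τ : PermSeq, 1 ≤ σ.1 ∧ 1 ≤ τ.1 ∧ π = PermSeq.oplus σ τ

/-- A permutation is down-indecomposable if it is not the skew sum of two nonempty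
permutations. -/
def DownIndec (π : PermSeq) : Prop :=
  ¬ ∃ σ τ : PermSeq, 1 ≤ σ.1 ∧ 1 ≤ τ.1 ∧ π = PermSeq.ominus σ τ

/-! Encode `π` by its inversion graph on the positions. Its connected components are intervals
of positions (an inversion `l < k` jumps over every `j` between them, and `j` is inverted with `l`
or with `k`), so a disconnected graph yields a split position `k` with no inversion across it, i.e.
`π = σ ⊕ τ`; conversely a direct sum has no inversion across its seam. Hence `π` is
up-indecomposable iff its inversion graph is connected. A finite connected graph on at least two
vertices has a vertex whose removal keeps it connected (a leaf of a spanning tree), and deleting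
that entry of `π` leaves a pattern whose inversion graph is the induced subgraph. Complementation
`π(i) ↦ n + 1 - π(i)` exchanges `⊕` and `⊖` and preserves containment, giving the second half. -/

open Equiv Function SimpleGraph

variable {m n : ℕ}

lemma exists_perm_lt_iff_lt {α : Type*} [LinearOrder α] {g : Fin m → α} (hg : Injective g) :
    ∃ σ : Perm (Fin m), ∀ i j, σ i < σ j ↔ g i < g j := by
  classical
  have hcard : Fintype.card (Set.range g) = m := by simp [Set.card_range_of_injective hg]
  refine ⟨(Equiv.ofInjective g hg).trans (Fintype.orderIsoFinOfCardEq _ hcard).symm.toEquiv,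
    fun i j => ?_⟩
  simp only [Equiv.trans_apply, RelIso.coe_fn_toEquiv, OrderIso.lt_iff_lt]
  exact Iff.rfl

lemma val_permOplus_lt_iff (σ : Perm (Fin m)) (τ : Perm (Fin n)) (i : Fin (m + n)) :
    (permOplus σ τ i : ℕ) < m ↔ (i : ℕ) < m := by
  induction i using Fin.addCases <;> simp [permOplus]

lemma exists_permOplus_eq {π : Perm (Fin (m + n))}
    (h : ∀ i : Fin (m + n), (i : ℕ) < m → (π i : ℕ) < m) : ∃ σ τ, permOplus σ τ = π := by
  set π' : Perm (Fin m ⊕ Fin n) := finSumFinEquiv.trans (π.trans finSumFinEquiv.symm)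
  have hπ' : Set.MapsTo π' (Set.range Sum.inl) (Set.range Sum.inl) := by
    rintro _ ⟨a, rfl⟩
    have ha := h (Fin.castAdd n a) a.isLt
    refine ⟨Fin.castLT _ ha, ?_⟩
    simp [π', ← finSumFinEquiv_symm_apply_castAdd]
  obtain ⟨⟨σ, τ⟩, hστ⟩ := Perm.mem_sumCongrHom_range_of_perm_mapsTo_inl hπ'
  refine ⟨σ, τ, Equiv.ext fun i => ?_⟩
  have := congrArg (fun p : Perm (Fin m ⊕ Fin n) => finSumFinEquiv (p (finSumFinEquiv.symm i))) hστ
  simpa [permOplus, π'] using this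

/-- For `0 < k < n` this says that `π = σ ⊕ τ` with `σ` of length `k`. -/
def SplitsAt (π : Perm (Fin n)) (k : ℕ) : Prop :=
  ∀ i j : Fin n, (i : ℕ) < k → k ≤ (j : ℕ) → π i < π j

lemma splitsAt_permOplus (σ : Perm (Fin m)) (τ : Perm (Fin n)) : SplitsAt (permOplus σ τ) m :=
  fun i j hi hj => by
    have := (val_permOplus_lt_iff σ τ i).2 hi
    have := (val_permOplus_lt_iff σ τ j).not.2 hj.not_gt
    rw [Fin.lt_def]; omega

lemma SplitsAt.val_lt {π : Perm (Fin n)} {k : ℕ} (h : SplitsAt π k) {i : Fin n} (hi : (i : ℕ) < k) :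
    (π i : ℕ) < k := by
  -- every value up to `π i` is taken at a position before `k`
  have hcard := Finset.card_le_card_of_injOn (fun w => (π.symm w : ℕ)) (s := Finset.Iic (π i))
    (t := Finset.range k) (fun w hw => ?_) ((Fin.val_injective.comp π.symm.injective).injOn)
  · simp only [Fin.card_Iic, Finset.card_range] at hcard
    omega
  · have hw : w ≤ π i := Finset.mem_Iic.1 hw
    simp only [Finset.coe_range, Set.mem_Iio]
    by_contra! hk
    exact (h i _ hi hk).not_ge (by simpa using hw)

lemma upIndec_iff_forall_not_splitsAt (π : Perm (Fin n)) :
    UpIndec ⟨n, π⟩ ↔ ∀ k, 0 < k → k < n → ¬ SplitsAt π k := by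
  constructor
  · intro hπ k hk hkn hsplit
    obtain ⟨l, rfl⟩ : ∃ l, n = k + l := ⟨n - k, by omega⟩
    obtain ⟨σ, τ, rfl⟩ := exists_permOplus_eq fun i hi => hsplit.val_lt hi
    exact hπ ⟨⟨k, σ⟩, ⟨l, τ⟩, hk, by dsimp only; omega, rfl⟩
  · rintro h ⟨⟨k, σ⟩, ⟨l, τ⟩, hk, hl, hπ⟩
    obtain ⟨rfl, hπ⟩ := Sigma.mk.inj_iff.1 hπ
    cases eq_of_heq hπ
    dsimp only at hk hl
    exact h k hk (by dsimp only; omega) (splitsAt_permOplus σ τ)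

namespace Equiv.Perm

def inversionGraph (π : Perm (Fin n)) : SimpleGraph (Fin n) :=
  SimpleGraph.fromRel fun i j => i < j ∧ π j < π i

variable {π : Perm (Fin n)} {i j k : Fin n}

lemma inversionGraph_adj_of_lt (hij : i < j) : π.inversionGraph.Adj i j ↔ π j < π i := by
  simp [inversionGraph, hij, hij.ne, hij.not_gt]

lemma lt_of_not_inversionGraph_adj (hij : i < j) (h : ¬ π.inversionGraph.Adj i j) : π i < π j :=
  (not_lt.1 (mt (inversionGraph_adj_of_lt hij).2 h)).lt_of_ne (π.injective.ne hij.ne)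

lemma inversionGraph_adj_or_adj (hij : i < j) (hjk : j < k) (hik : π.inversionGraph.Adj i k) :
    π.inversionGraph.Adj i j ∨ π.inversionGraph.Adj j k := by
  rw [inversionGraph_adj_of_lt hij, inversionGraph_adj_of_lt hjk]
  rw [inversionGraph_adj_of_lt (hij.trans hjk)] at hik
  by_contra! h
  exact (hik.trans_le h.1).not_ge h.2

lemma inversionGraph_reachable_of_le_of_le (hik : π.inversionGraph.Reachable i k) (hij : i ≤ j)
    (hjk : j ≤ k) : π.inversionGraph.Reachable i j := by
  rw [reachable_iff_reflTransGen] at hik ⊢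
  induction hik generalizing j with
  | refl => rw [le_antisymm hij hjk]
  | @tail l k hil hlk ih =>
    rcases le_or_gt j l with hjl | hlj
    · exact ih hij hjl
    rcases hjk.eq_or_lt with rfl | hjk
    · exact hil.tail hlk
    rcases inversionGraph_adj_or_adj hlj hjk hlk with hlj' | hjk'
    · exact hil.tail hlj'
    · exact (hil.tail hlk).tail hjk'.symm

lemma connected_inversionGraph_iff (hn : 0 < n) :
    π.inversionGraph.Connected ↔ ∀ k, 0 < k → k < n → ¬ SplitsAt π k := by
  set z : Fin n := ⟨0, hn⟩
  constructor
  · intro hconn k _ hkn hsplit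
    have hlt : ∀ j, π.inversionGraph.Reachable z j → (j : ℕ) < k := by
      intro j hj
      rw [reachable_iff_reflTransGen] at hj
      induction hj with
      | refl => omega
      | @tail j l _ hjl ih =>
        by_contra! hl
        have hjl' : j < l := Fin.lt_def.2 (by omega)
        exact ((inversionGraph_adj_of_lt hjl').1 hjl).not_gt (hsplit j l ih hl)
    exact (hlt ⟨k, hkn⟩ (hconn z _)).false
  · intro h
    by_contra hnc
    obtain ⟨j, hj, hmin⟩ : ∃ j ∈ {j | ¬ π.inversionGraph.Reachable z j}, ∀ i ∈ _, ¬ i < j := by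
      refine wellFounded_lt.has_min _ ?_
      by_contra hall
      simp only [Set.not_nonempty_iff_eq_empty, Set.eq_empty_iff_forall_notMem, Set.mem_ofPred_eq,
        not_not] at hall
      exact hnc ((connected_iff_exists_forall_reachable _).2 ⟨z, hall⟩)
    refine h j (Nat.pos_of_ne_zero fun h0 => hj ?_) j.isLt fun a b ha hb => ?_
    · rw [show j = z from Fin.ext h0]
    have hza : π.inversionGraph.Reachable z a := by
      by_contra hza
      exact hmin a hza ha
    have hzb : ¬ π.inversionGraph.Reachable z b := fun hzb =>
      hj (inversionGraph_reachable_of_le_of_le hzb (Nat.zero_le _) hb)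
    exact lt_of_not_inversionGraph_adj (ha.trans_le hb) fun hab => hzb (hza.trans hab.reachable)

lemma inversionGraph_eq_comap {σ : Perm (Fin m)} {π : Perm (Fin n)} {f : Fin m → Fin n}
    (hf : StrictMono f) (h : ∀ i j, σ i < σ j ↔ π (f i) < π (f j)) :
    σ.inversionGraph = π.inversionGraph.comap f := by
  ext i j
  simp [Perm.inversionGraph, h, hf.lt_iff_lt, hf.injective.ne_iff]

end Equiv.Perm

lemma upIndec_iff_connected_inversionGraph (hn : 0 < n) (π : Perm (Fin n)) :
    UpIndec ⟨n, π⟩ ↔ π.inversionGraph.Connected :=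
  (upIndec_iff_forall_not_splitsAt π).trans (Perm.connected_inversionGraph_iff hn).symm

lemma PermSeq.exists_upIndec_permLE {π : PermSeq} (hπ : UpIndec π) (hlen : 1 < π.1) :
    ∃ σ : PermSeq, UpIndec σ ∧ σ.1 = π.1 - 1 ∧ PermLE σ π := by
  obtain ⟨_ | m, π⟩ := π
  · simp at hlen
  dsimp only at hlen
  have : Nontrivial (Fin (m + 1)) := Fin.nontrivial_iff_two_le.2 hlen
  obtain ⟨v, hv⟩ := ((upIndec_iff_connected_inversionGraph m.succ_pos π).1
    hπ).exists_connected_induce_compl_singleton_of_finite_nontrivial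
  obtain ⟨σ, hσ⟩ :=
    exists_perm_lt_iff_lt (π.injective.comp (Fin.succAbove_right_injective (p := v)))
  have hσconn : σ.inversionGraph.Connected := by
    rw [Perm.inversionGraph_eq_comap (Fin.strictMono_succAbove v) hσ]
    exact (Iso.comap (finSuccAboveEquiv v) _).connected_iff.2 hv
  exact ⟨⟨m, σ⟩, (upIndec_iff_connected_inversionGraph (by omega) σ).2 hσconn, rfl,
    v.succAbove, Fin.strictMono_succAbove v, hσ⟩

lemma permOplus_trans_revPerm (σ : Perm (Fin m)) (τ : Perm (Fin n)) :
    (permOplus σ τ).trans Fin.revPerm = permOminus (σ.trans Fin.revPerm) (τ.trans Fin.revPerm) := by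
  ext i
  induction i using Fin.addCases <;> simp [permOplus, permOminus, Fin.val_rev] <;> omega

namespace PermSeq

def complement (π : PermSeq) : PermSeq := ⟨π.1, π.2.trans Fin.revPerm⟩

@[simp]
lemma complement_complement (π : PermSeq) : π.complement.complement = π := by
  obtain ⟨n, π⟩ := π
  simp only [complement]
  congr
  ext i
  simp

lemma complement_oplus (σ τ : PermSeq) :
    (σ.oplus τ).complement = σ.complement.ominus τ.complement :=
  congrArg (Sigma.mk _) (permOplus_trans_revPerm σ.2 τ.2)

lemma complement_ominus (σ τ : PermSeq) :
    (σ.ominus τ).complement = σ.complement.oplus τ.complement := by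
  simpa using (congrArg complement (complement_oplus σ.complement τ.complement)).symm

lemma upIndec_complement {π : PermSeq} (hπ : DownIndec π) : UpIndec π.complement :=
  fun ⟨σ, τ, hσ, hτ, h⟩ => hπ ⟨σ.complement, τ.complement, hσ, hτ, by
    simpa [complement_oplus] using congrArg complement h⟩

lemma downIndec_complement {π : PermSeq} (hπ : UpIndec π) : DownIndec π.complement :=
  fun ⟨σ, τ, hσ, hτ, h⟩ => hπ ⟨σ.complement, τ.complement, hσ, hτ, by
    simpa [complement_ominus] using congrArg complement h⟩

lemma permLE_complement {σ π : PermSeq} (h : PermLE σ π) : PermLE σ.complement π.complement := by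
  obtain ⟨f, hf, hσπ⟩ := h
  exact ⟨f, hf, fun i j => Fin.rev_lt_rev.trans ((hσπ j i).trans Fin.rev_lt_rev.symm)⟩

end PermSeq

/-- Every up-indecomposable permutation of length `n > 1` contains an up-indecomposable
permutation of length `n - 1`; the same holds for down-indecomposable permutations. -/
theorem indec_contains_smaller_indec :
    (∀ π : PermSeq, UpIndec π → 1 < π.1 →
      ∃ σ : PermSeq, UpIndec σ ∧ σ.1 = π.1 - 1 ∧ PermLE σ π) ∧
    (∀ π : PermSeq, DownIndec π → 1 < π.1 →
      ∃ σ : PermSeq, DownIndec σ ∧ σ.1 = π.1 - 1 ∧ PermLE σ π) := by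
  refine ⟨fun π => PermSeq.exists_upIndec_permLE, fun π hπ hlen => ?_⟩
  obtain ⟨σ, hσ, hlen', hσπ⟩ := PermSeq.exists_upIndec_permLE (PermSeq.upIndec_complement hπ) hlen
  exact ⟨σ.complement, PermSeq.downIndec_complement hσ, hlen', by
    simpa using PermSeq.permLE_complement hσπ⟩
end

section
/- Let X, Y ⊆ ℕ be two n-element subsets, f : X → Y a bijection, and π ∈ S_n the permutation order-isomorphic to f. Suppose π ∈ H_k^+ ∪ H_k^-. Then every partition of X into r consecutive intervals J_1 < ... < J_r can be refined by a partition of X into s consecutive intervals I_1 < ... < I_s with s ≤ r + (k-1)(r-1) such that each image f(I_i) is an interval in Y. Similarly, every partition of Y into r intervals can be refined by a partition into at most r + (k-1)(r-1) intervals whose preimages under f are intervals in X. -/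
/-- Direct sum of a list of permutations. -/
def listOplus (l : List PermSeq) : PermSeq := l.foldr PermSeq.oplus ⟨0, 1⟩

/-- Skew sum of a list of permutations. -/
def listOminus (l : List PermSeq) : PermSeq := l.foldr PermSeq.ominus ⟨0, 1⟩

/-- `π ∈ H_k^+` : all up-blocks of the (unique) up-decomposition of `π` into
up-indecomposable permutations have length `< k`. -/
def HUp (k : ℕ) (π : PermSeq) : Prop :=
  ∃ l : List PermSeq, (∀ σ ∈ l, UpIndec σ ∧ σ.1 < k) ∧ π = listOplus l

/-- `π ∈ H_k^-` : all down-blocks of the (unique) down-decomposition of `π` into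
down-indecomposable permutations have length `< k`. -/
def HDown (k : ℕ) (π : PermSeq) : Prop :=
  ∃ l : List PermSeq, (∀ σ ∈ l, DownIndec σ ∧ σ.1 < k) ∧ π = listOminus l

/-- `I` is an interval in the finite set `X ⊆ ℕ`: a set of consecutive elements of `X`. -/
def IsIntervalIn (I X : Finset ℕ) : Prop :=
  I ⊆ X ∧ ∀ a ∈ I, ∀ c ∈ I, ∀ b ∈ X, a ≤ b → b ≤ c → b ∈ I

/-- `L` is a partition of `X` into (nonempty) consecutive intervals `J_1 < J_2 < ⋯ < J_r`. -/
def IsIntervalPartition (X : Finset ℕ) (L : List (Finset ℕ)) : Prop :=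
  (∀ J ∈ L, J.Nonempty ∧ IsIntervalIn J X) ∧
    L.foldr (· ∪ ·) ∅ = X ∧
    L.Pairwise fun A B => ∀ a ∈ A, ∀ b ∈ B, a < b

/-!
If `π = σ₁ ⊕ ⋯ ⊕ σ_t` with every `σ_j` of length `< k`, the block boundaries `B ⊆ {0, …, n}`
have gaps at most `k - 1`, and `f` maps the elements of `X` in positions between two boundaries
onto the elements of `Y` in the same positions (for a skew sum, in the reflected positions). So
every segment of `X` cut at both ends by `B` has an interval as image, and so has every single
point. Given a partition into `r` intervals, keep its `r - 1` interior cuts and, around each one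
not in `B`, cut at every position between the nearest boundaries on either side: at most `k - 1`
new cuts each. Each resulting segment is then a single point or lies between two boundaries.
Preimages are handled in the same way, with the reflected boundaries in the skew case.
-/

open Finset

namespace IntervalRefinement

section Segments

/-- For `x ∈ Z`, the position of `x` in `Z`, counted from `0`. -/
def rank (Z : Finset ℕ) (x : ℕ) : ℕ := #{z ∈ Z | z < x}

def seg (Z : Finset ℕ) (a b : ℕ) : Finset ℕ := {x ∈ Z | a ≤ rank Z x ∧ rank Z x < b}

variable {Z : Finset ℕ}

lemma rank_mono (Z : Finset ℕ) : Monotone (rank Z) := fun _ _ hxy =>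
  card_le_card fun _ hz => by
    simp only [mem_filter] at hz ⊢
    exact ⟨hz.1, hz.2.trans_le hxy⟩

lemma rank_lt_rank {x y : ℕ} (hx : x ∈ Z) (hxy : x < y) : rank Z x < rank Z y := by
  refine card_lt_card ((ssubset_iff_of_subset fun z hz => ?_).2 ⟨x, ?_, ?_⟩)
  · simp only [mem_filter] at hz ⊢
    exact ⟨hz.1, hz.2.trans hxy⟩
  · simp [hx, hxy]
  · simp

lemma lt_of_rank_lt {x y : ℕ} (h : rank Z x < rank Z y) : x < y := by
  by_contra! hyx
  exact (rank_mono Z hyx).not_gt h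

lemma le_of_rank_le {x y : ℕ} (hy : y ∈ Z) (h : rank Z x ≤ rank Z y) : x ≤ y := by
  by_contra! hyx
  exact (rank_lt_rank hy hyx).not_ge h

lemma rank_lt_card {x : ℕ} (hx : x ∈ Z) : rank Z x < #Z :=
  card_lt_card ((ssubset_iff_of_subset (filter_subset _ _)).2 ⟨x, hx, by simp⟩)

lemma rank_orderEmbOfFin {n : ℕ} (h : #Z = n) (i : Fin n) :
    rank Z (Z.orderEmbOfFin h i) = i := by
  have : {z ∈ Z | z < Z.orderEmbOfFin h i} = (Iio i).map (Z.orderEmbOfFin h).toEmbedding := by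
    ext z
    simp only [mem_filter, mem_map, mem_Iio, RelEmbedding.coe_toEmbedding]
    constructor
    · rintro ⟨hz, hlt⟩
      obtain ⟨j, rfl⟩ : z ∈ Set.range (Z.orderEmbOfFin h) := by simpa using hz
      exact ⟨j, (Z.orderEmbOfFin h).lt_iff_lt.1 hlt, rfl⟩
    · rintro ⟨j, hj, rfl⟩
      exact ⟨Z.orderEmbOfFin_mem h j, (Z.orderEmbOfFin h).lt_iff_lt.2 hj⟩
  rw [rank, this, card_map, Fin.card_Iio]

lemma exists_rank_eq {d : ℕ} (hd : d < #Z) : ∃ x ∈ Z, rank Z x = d :=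
  ⟨Z.orderEmbOfFin rfl ⟨d, hd⟩, Z.orderEmbOfFin_mem rfl _, rank_orderEmbOfFin rfl _⟩

lemma mem_seg {a b x : ℕ} : x ∈ seg Z a b ↔ x ∈ Z ∧ a ≤ rank Z x ∧ rank Z x < b :=
  mem_filter

lemma seg_subset (Z : Finset ℕ) (a b : ℕ) : seg Z a b ⊆ Z := filter_subset _ _

lemma isIntervalIn_seg (Z : Finset ℕ) (a b : ℕ) : IsIntervalIn (seg Z a b) Z := by
  refine ⟨seg_subset Z a b, fun x hx z hz y hy hxy hyz => ?_⟩
  rw [mem_seg] at hx hz ⊢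
  exact ⟨hy, hx.2.1.trans (rank_mono Z hxy), (rank_mono Z hyz).trans_lt hz.2.2⟩

lemma seg_nonempty {a b : ℕ} (hab : a < b) (hb : b ≤ #Z) : (seg Z a b).Nonempty := by
  obtain ⟨x, hx, hrank⟩ := exists_rank_eq (hab.trans_le hb)
  exact ⟨x, mem_seg.2 ⟨hx, hrank.ge, hrank ▸ hab⟩⟩

lemma seg_succ_subsingleton (Z : Finset ℕ) (d : ℕ) : (seg Z d (d + 1) : Set ℕ).Subsingleton := by
  intro x hx y hy
  rw [mem_coe, mem_seg] at hx hy
  exact le_antisymm (le_of_rank_le hy.1 (by omega)) (le_of_rank_le hx.1 (by omega))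

lemma isIntervalIn_of_subsingleton {I : Finset ℕ} (hIZ : I ⊆ Z) (hI : (I : Set ℕ).Subsingleton) :
    IsIntervalIn I Z := by
  refine ⟨hIZ, fun a ha c hc b _ hab hbc => ?_⟩
  obtain rfl : a = c := hI ha hc
  rwa [le_antisymm hbc hab]

lemma mem_foldr_union {L : List (Finset ℕ)} {x : ℕ} :
    x ∈ L.foldr (· ∪ ·) ∅ ↔ ∃ J ∈ L, x ∈ J := by
  induction L with
  | nil => simp
  | cons J L ih => simp [ih]

lemma _root_.Monotone.exists_castSucc_le_lt {m : ℕ} {g : Fin (m + 1) → ℕ} (hg : Monotone g)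
    {v : ℕ} (h0 : g 0 ≤ v) (hv : v < g (Fin.last m)) :
    ∃ i : Fin m, g i.castSucc ≤ v ∧ v < g i.succ := by
  induction m with
  | zero => exact absurd hv h0.not_gt
  | succ m ih =>
    by_cases hlt : v < g (Fin.last m).castSucc
    · obtain ⟨i, hi, hi'⟩ := ih (hg.comp Fin.strictMono_castSucc.monotone) h0 hlt
      exact ⟨i.castSucc, hi, by rwa [Fin.succ_castSucc]⟩
    · exact ⟨Fin.last m, not_lt.1 hlt, hv⟩

def segs (Z : Finset ℕ) {m : ℕ} (g : Fin (m + 1) → ℕ) : List (Finset ℕ) :=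
  List.ofFn fun i : Fin m => seg Z (g i.castSucc) (g i.succ)

lemma isIntervalPartition_segs {m : ℕ} {g : Fin (m + 1) → ℕ} (hg : StrictMono g) (h0 : g 0 = 0)
    (hm : g (Fin.last m) = #Z) : IsIntervalPartition Z (segs Z g) := by
  refine ⟨?_, ?_, ?_⟩
  · simp only [segs, List.mem_ofFn, forall_exists_index, forall_apply_eq_imp_iff]
    exact fun i => ⟨seg_nonempty (hg Fin.castSucc_lt_succ) (hm ▸ hg.monotone (Fin.le_last _)),
      isIntervalIn_seg _ _ _⟩
  · ext x
    simp only [mem_foldr_union, segs, List.mem_ofFn, exists_exists_eq_and]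
    refine ⟨fun ⟨i, hx⟩ => seg_subset _ _ _ hx, fun hx => ?_⟩
    obtain ⟨i, hi⟩ := hg.monotone.exists_castSucc_le_lt (h0.trans_le (Nat.zero_le _))
      (hm ▸ rank_lt_card hx)
    exact ⟨i, mem_seg.2 ⟨hx, hi⟩⟩
  · simp only [segs, List.pairwise_ofFn]
    intro i j hij a ha b hb
    rw [mem_seg] at ha hb
    exact lt_of_rank_lt <| ha.2.2.trans_le <|
      (hg.monotone (Fin.succ_le_castSucc_iff.2 hij)).trans hb.2.1

lemma exists_isIntervalPartition_of_cuts {D : Finset ℕ} (h0 : 0 ∈ D) (hZ : #Z ∈ D)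
    (hD : ∀ d ∈ D, d ≤ #Z) :
    ∃ L, IsIntervalPartition Z L ∧ L.length + 1 = #D ∧
      ∀ I ∈ L, ∃ d ∈ D, ∃ d' ∈ D, d < d' ∧ (∀ c ∈ D, c ≤ d ∨ d' ≤ c) ∧ I = seg Z d d' := by
  obtain ⟨m, hm⟩ : ∃ m, #D = m + 1 := Nat.exists_eq_add_one.2 (card_pos.2 ⟨0, h0⟩)
  set e := D.orderEmbOfFin hm
  have hrange : ∀ c ∈ D, ∃ j, e j = c := fun c hc => by
    rwa [← Set.mem_range, range_orderEmbOfFin, mem_coe]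
  have he0 : e 0 = 0 := by
    obtain ⟨j, hj⟩ := hrange 0 h0
    exact Nat.eq_zero_of_le_zero ((e.monotone (Fin.zero_le j)).trans hj.le)
  have helast : e (Fin.last m) = #Z := by
    obtain ⟨j, hj⟩ := hrange _ hZ
    exact le_antisymm (hD _ (D.orderEmbOfFin_mem hm _)) (hj ▸ e.monotone (Fin.le_last j))
  refine ⟨segs Z e, isIntervalPartition_segs e.strictMono he0 helast, by simp [segs, hm], ?_⟩
  simp only [segs, List.mem_ofFn, forall_exists_index, forall_apply_eq_imp_iff]
  refine fun i => ⟨_, D.orderEmbOfFin_mem hm _, _, D.orderEmbOfFin_mem hm _,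
    e.strictMono Fin.castSucc_lt_succ, fun c hc => ?_, rfl⟩
  obtain ⟨j, rfl⟩ := hrange c hc
  rcases le_or_gt j i.castSucc with hji | hij
  · exact .inl (e.monotone hji)
  · exact .inr (e.monotone (Fin.castSucc_lt_iff_succ_le.1 hij))

def start (Z J : Finset ℕ) : ℕ := #{z ∈ Z | ∀ j ∈ J, z < j}

lemma start_le_rank {J : Finset ℕ} {x : ℕ} (hx : x ∈ J) : start Z J ≤ rank Z x :=
  card_le_card fun z hz => by
    simp only [mem_filter] at hz ⊢
    exact ⟨hz.1, hz.2 x hx⟩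

lemma exists_le_of_start_le {J : Finset ℕ} {z : ℕ} (hz : z ∈ Z) (h : start Z J ≤ rank Z z) :
    ∃ j ∈ J, j ≤ z := by
  by_contra! hbelow
  refine (card_lt_card ((ssubset_iff_of_subset fun y hy => ?_).2 ⟨z, ?_, ?_⟩)).not_ge h
  · simp only [mem_filter] at hy ⊢
    exact ⟨hy.1, fun j hj => hy.2.trans (hbelow j hj)⟩
  · exact mem_filter.2 ⟨hz, hbelow⟩
  · simp

lemma start_lt_card {J : Finset ℕ} (hJ : J.Nonempty) (hJZ : J ⊆ Z) : start Z J < #Z :=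
  (start_le_rank hJ.choose_spec).trans_lt (rank_lt_card (hJZ hJ.choose_spec))

variable {L : List (Finset ℕ)}

lemma zero_mem_map_start (hL : IsIntervalPartition Z L) (hne : L ≠ []) : 0 ∈ L.map (start Z) := by
  obtain ⟨J, hJ⟩ := List.exists_mem_of_ne_nil L hne
  obtain ⟨x, hx, hx0⟩ := exists_rank_eq ((hL.1 J hJ).1.card_pos.trans_le
    (card_le_card (hL.1 J hJ).2.1))
  obtain ⟨J', hJ', hxJ'⟩ := mem_foldr_union.1 (hL.2.1.symm ▸ hx)
  exact List.mem_map.2 ⟨J', hJ', Nat.eq_zero_of_le_zero (hx0 ▸ start_le_rank hxJ')⟩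

lemma exists_superset_seg (hL : IsIntervalPartition Z L) {d d' : ℕ} (hdd' : d < d')
    (hd' : d' ≤ #Z) (hstart : ∀ J ∈ L, start Z J ≤ d ∨ d' ≤ start Z J) :
    ∃ J ∈ L, seg Z d d' ⊆ J := by
  obtain ⟨x, hx, hrank⟩ := exists_rank_eq (show d' - 1 < #Z by omega)
  obtain ⟨J, hJ, hxJ⟩ := mem_foldr_union.1 (hL.2.1.symm ▸ hx)
  have hJd : start Z J ≤ d := by
    have := start_le_rank (Z := Z) hxJ
    have := hstart J hJ
    omega
  refine ⟨J, hJ, fun z hz => ?_⟩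
  rw [mem_seg] at hz
  obtain ⟨j, hj, hjz⟩ := exists_le_of_start_le hz.1 (hJd.trans hz.2.1)
  exact (hL.1 J hJ).2.2 j hj x hxJ z hz.1 hjz (le_of_rank_le hx (by omega))

end Segments

def BoundedGaps (B : Set ℕ) (n g : ℕ) : Prop :=
  ∀ c ≤ n, ∃ a ∈ B, ∃ b ∈ B, a ≤ c ∧ c ≤ b ∧ b ≤ n ∧ b ≤ a + g

namespace BoundedGaps

variable {B : Set ℕ} {n g : ℕ}

lemma zero_mem (hB : BoundedGaps B n g) : 0 ∈ B := by
  obtain ⟨a, ha, -, -, ha0, -⟩ := hB 0 (Nat.zero_le n)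
  rwa [← Nat.le_zero.1 ha0]

lemma top_mem (hB : BoundedGaps B n g) : n ∈ B := by
  obtain ⟨-, -, b, hb, -, hnb, hbn, -⟩ := hB n le_rfl
  rwa [← le_antisymm hbn hnb]

lemma reflect (hB : BoundedGaps B n g) : BoundedGaps ((n - ·) '' B) n g := fun c hc => by
  obtain ⟨a, ha, b, hb, hac, hcb, hbn, hab⟩ := hB (n - c) (Nat.sub_le n c)
  exact ⟨n - b, ⟨b, hb, rfl⟩, n - a, ⟨a, ha, rfl⟩, by omega, by omega, by omega, by omega⟩

lemma shift (hB : BoundedGaps B n g) {m : ℕ} (hm : m ≤ g) :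
    BoundedGaps (insert 0 ((m + ·) '' B)) (m + n) g := fun c hc => by
  by_cases hcm : c ≤ m
  · exact ⟨0, .inl rfl, m, .inr ⟨0, hB.zero_mem, rfl⟩, Nat.zero_le c, hcm, by omega, by omega⟩
  · obtain ⟨a, ha, b, hb, hac, hcb, hbn, hab⟩ := hB (c - m) (by omega)
    exact ⟨m + a, .inr ⟨a, ha, rfl⟩, m + b, .inr ⟨b, hb, rfl⟩, by omega, by omega, by omega,
      by omega⟩

end BoundedGaps

section Refinement

variable {Z : Finset ℕ} {L : List (Finset ℕ)}

lemma exists_saturated_cuts {B : Set ℕ} {n g : ℕ} (hB : BoundedGaps B n g) {C : Finset ℕ}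
    (hC : ∀ c ∈ C, c ≤ n) :
    ∃ D : Finset ℕ, C ⊆ D ∧ 0 ∈ D ∧ n ∈ D ∧ (∀ d ∈ D, d ≤ n) ∧
      #D ≤ #{0, n} + (g + 1) * #(C \ {0, n}) ∧ ∀ d ∈ D, d ∉ B → d + 1 ∈ D ∧ d - 1 ∈ D := by
  have h0B := hB.zero_mem
  have hnB := hB.top_mem
  choose! a ha b hb hac hcb hbn hab using hB
  refine ⟨{0, n} ∪ (C \ {0, n}).biUnion fun c => Icc (a c) (b c), fun c hc => ?_, by simp,
    by simp, ?_, ?_, ?_⟩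
  · by_cases h : c ∈ ({0, n} : Finset ℕ)
    · exact mem_union_left _ h
    · exact mem_union_right _ (mem_biUnion.2 ⟨c, mem_sdiff.2 ⟨hc, h⟩,
        mem_Icc.2 ⟨hac c (hC c hc), hcb c (hC c hc)⟩⟩)
  · simp only [mem_union, mem_insert, mem_singleton, mem_biUnion, mem_sdiff, mem_Icc]
    rintro d ((rfl | rfl) | ⟨c, ⟨hc, -⟩, -, hdc⟩)
    exacts [Nat.zero_le n, le_rfl, hdc.trans (hbn c (hC c hc))]
  · refine (card_union_le _ _).trans (Nat.add_le_add_left ?_ _)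
    rw [mul_comm]
    refine card_biUnion_le_card_mul _ _ _ fun c hc => ?_
    have hcn := hC c (mem_sdiff.1 hc).1
    have := hab c hcn
    rw [Nat.card_Icc]
    omega
  · simp only [mem_union, mem_insert, mem_singleton, mem_biUnion, mem_sdiff, mem_Icc]
    rintro d ((rfl | rfl) | ⟨c, hc, hcd, hdc⟩) hdB
    · exact absurd h0B hdB
    · exact absurd hnB hdB
    · have hcn := hC c hc.1
      have had : a c ≠ d := fun h => hdB (h ▸ ha c hcn)
      have hbd : b c ≠ d := fun h => hdB (h ▸ hb c hcn)
      exact ⟨.inr ⟨c, hc, by omega, by omega⟩, .inr ⟨c, hc, by omega, by omega⟩⟩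

lemma card_starts_sdiff_le (hL : IsIntervalPartition Z L) (hne : L ≠ []) :
    #((L.map (start Z)).toFinset \ {0, #Z}) ≤ L.length - 1 := by
  have h0 := List.mem_toFinset.2 (zero_mem_map_start hL hne)
  calc #((L.map (start Z)).toFinset \ {0, #Z})
      ≤ #((L.map (start Z)).toFinset.erase 0) :=
        card_le_card fun c hc => by
          simp only [mem_sdiff, mem_insert, mem_singleton, not_or] at hc
          exact mem_erase.2 ⟨hc.2.1, hc.1⟩
    _ = #(L.map (start Z)).toFinset - 1 := card_erase_of_mem h0
    _ ≤ L.length - 1 := Nat.sub_le_sub_right ((List.toFinset_card_le _).trans_eq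
        (List.length_map _)) 1

theorem exists_refinement {B : Set ℕ} {g : ℕ} (hB : BoundedGaps B #Z g) (P : Finset ℕ → Prop)
    (hPB : ∀ d ∈ B, ∀ d' ∈ B, P (seg Z d d')) (hPsucc : ∀ d, P (seg Z d (d + 1)))
    (hL : IsIntervalPartition Z L) :
    ∃ L', IsIntervalPartition Z L' ∧ (∀ I ∈ L', ∃ J ∈ L, I ⊆ J) ∧
      L'.length ≤ L.length + g * (L.length - 1) ∧ ∀ I ∈ L', P I := by
  have hC : ∀ c ∈ (L.map (start Z)).toFinset, c ≤ #Z := by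
    simp only [List.mem_toFinset, List.mem_map, forall_exists_index, and_imp]
    rintro _ J hJ rfl
    exact (start_lt_card (hL.1 J hJ).1 (hL.1 J hJ).2.1).le
  obtain ⟨D, hCD, h0, hn, hle, hcard, hsat⟩ := exists_saturated_cuts hB hC
  obtain ⟨L', hL', hlen, hpieces⟩ := exists_isIntervalPartition_of_cuts h0 hn hle
  refine ⟨L', hL', fun I hI => ?_, ?_, fun I hI => ?_⟩
  · obtain ⟨d, -, d', hd', hdd', hcons, rfl⟩ := hpieces I hI
    exact exists_superset_seg hL hdd' (hle d' hd') fun J hJ =>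
      hcons _ (hCD (List.mem_toFinset.2 (List.mem_map_of_mem hJ)))
  · rcases eq_or_ne L [] with rfl | hne
    · obtain rfl : Z = ∅ := hL.2.1.symm
      simp only [List.map_nil, List.toFinset_nil, empty_sdiff, card_empty, mul_zero, add_zero,
        insert_eq_of_mem (mem_singleton_self 0), card_singleton] at hcard
      simp only [List.length_nil, Nat.zero_sub, mul_zero, add_zero]
      omega
    · have hpair : #({0, #Z} : Finset ℕ) ≤ 2 := card_le_two
      have := Nat.mul_le_mul_left (g + 1) (card_starts_sdiff_le hL hne)
      have hr := List.length_pos_iff.2 hne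
      have hsplit := add_one_mul g (L.length - 1)
      omega
  · obtain ⟨d, hd, d', hd', hdd', hcons, rfl⟩ := hpieces I hI
    by_cases hdB : d ∈ B ∧ d' ∈ B
    · exact hPB d hdB.1 d' hdB.2
    · -- a cut outside `B` has both neighbours in `D`, so the segment is a single position
      obtain rfl : d' = d + 1 := by
        rcases not_and_or.1 hdB with h | h
        · have := hcons _ (hsat d hd h).1
          omega
        · have := hcons _ (hsat d' hd' h).2
          omega
      exact hPsucc d

end Refinement

section Transport

variable {X Y : Finset ℕ} {f : ℕ → ℕ} {L : List (Finset ℕ)}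

lemma image_filter_mem_eq {J : Finset ℕ} (hJ : Set.SurjOn f X J) :
    {x ∈ X | f x ∈ J}.image f = J := by
  ext y
  simp only [mem_image, mem_filter]
  refine ⟨fun ⟨x, ⟨_, hfx⟩, hxy⟩ => hxy ▸ hfx, fun hy => ?_⟩
  obtain ⟨x, hx, rfl⟩ := hJ hy
  exact ⟨x, ⟨hx, hy⟩, rfl⟩

lemma filter_mem_seg_eq (hf : Set.MapsTo f X Y) {d d' e e' : ℕ}
    (h : ∀ x ∈ X, (e ≤ rank Y (f x) ∧ rank Y (f x) < e') ↔ (d ≤ rank X x ∧ rank X x < d')) :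
    {x ∈ X | f x ∈ seg Y e e'} = seg X d d' := by
  ext x
  simp only [mem_filter, mem_seg]
  exact ⟨fun ⟨hx, _, hfx⟩ => ⟨hx, (h x hx).1 hfx⟩,
    fun ⟨hx, hdx⟩ => ⟨hx, hf hx, (h x hx).2 hdx⟩⟩

theorem exists_refinement_image (hmaps : Set.MapsTo f X Y) (hsurj : Set.SurjOn f X Y)
    {B : Set ℕ} {g : ℕ} (hB : BoundedGaps B #X g)
    (hcut : ∀ d ∈ B, ∀ d' ∈ B, ∃ e e', {x ∈ X | f x ∈ seg Y e e'} = seg X d d')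
    (hL : IsIntervalPartition X L) :
    ∃ L', IsIntervalPartition X L' ∧ (∀ I ∈ L', ∃ J ∈ L, I ⊆ J) ∧
      L'.length ≤ L.length + g * (L.length - 1) ∧ ∀ I ∈ L', IsIntervalIn (I.image f) Y := by
  refine exists_refinement hB _ (fun d hd d' hd' => ?_) (fun d => ?_) hL
  · obtain ⟨e, e', heq⟩ := hcut d hd d' hd'
    rw [← heq, image_filter_mem_eq (hsurj.mono subset_rfl (seg_subset Y e e'))]
    exact isIntervalIn_seg Y e e'
  · refine isIntervalIn_of_subsingleton (fun y hy => ?_) ?_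
    · obtain ⟨x, hx, rfl⟩ := mem_image.1 hy
      exact hmaps (seg_subset X _ _ hx)
    · rw [coe_image]
      exact (seg_succ_subsingleton X d).image f

theorem exists_refinement_preimage (hf : Set.InjOn f X) {B : Set ℕ} {g : ℕ}
    (hB : BoundedGaps B #Y g)
    (hcut : ∀ e ∈ B, ∀ e' ∈ B, ∃ d d', {x ∈ X | f x ∈ seg Y e e'} = seg X d d')
    (hL : IsIntervalPartition Y L) :
    ∃ L', IsIntervalPartition Y L' ∧ (∀ I ∈ L', ∃ J ∈ L, I ⊆ J) ∧
      L'.length ≤ L.length + g * (L.length - 1) ∧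
      ∀ I ∈ L', IsIntervalIn {x ∈ X | f x ∈ I} X := by
  refine exists_refinement hB _ (fun e he e' he' => ?_) (fun e => ?_) hL
  · obtain ⟨d, d', heq⟩ := hcut e he e' he'
    rw [heq]
    exact isIntervalIn_seg X d d'
  · refine isIntervalIn_of_subsingleton (filter_subset _ _) fun x hx x' hx' => ?_
    simp only [coe_filter, Set.mem_ofPred_eq] at hx hx'
    exact hf hx.1 hx'.1 (seg_succ_subsingleton Y e hx.2 hx'.2)

end Transport

section Permutations

variable {m n : ℕ}

def IsUpCut (π : Equiv.Perm (Fin n)) (c : ℕ) : Prop := ∀ i : Fin n, (i : ℕ) < c ↔ (π i : ℕ) < c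

def IsDownCut (π : Equiv.Perm (Fin n)) (c : ℕ) : Prop :=
  ∀ i : Fin n, (i : ℕ) < c ↔ n ≤ (π i : ℕ) + c

lemma permOplus_castAdd (σ : Equiv.Perm (Fin m)) (τ : Equiv.Perm (Fin n)) (i : Fin m) :
    permOplus σ τ (Fin.castAdd n i) = Fin.castAdd n (σ i) := by
  simp [permOplus]

lemma permOplus_natAdd (σ : Equiv.Perm (Fin m)) (τ : Equiv.Perm (Fin n)) (j : Fin n) :
    permOplus σ τ (Fin.natAdd m j) = Fin.natAdd m (τ j) := by
  simp [permOplus]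

lemma val_permOminus_castAdd (σ : Equiv.Perm (Fin m)) (τ : Equiv.Perm (Fin n)) (i : Fin m) :
    (permOminus σ τ (Fin.castAdd n i) : ℕ) = n + σ i := by
  simp [permOminus, Nat.add_comm]

lemma val_permOminus_natAdd (σ : Equiv.Perm (Fin m)) (τ : Equiv.Perm (Fin n)) (j : Fin n) :
    (permOminus σ τ (Fin.natAdd m j) : ℕ) = τ j := by
  simp [permOminus]

lemma isUpCut_zero (π : Equiv.Perm (Fin n)) : IsUpCut π 0 := fun i => by simp

lemma isDownCut_zero (π : Equiv.Perm (Fin n)) : IsDownCut π 0 := fun i => by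
  simp [(π i).isLt]

lemma IsUpCut.permOplus (σ : Equiv.Perm (Fin m)) {τ : Equiv.Perm (Fin n)} {c : ℕ}
    (h : IsUpCut τ c) : IsUpCut (permOplus σ τ) (m + c) := by
  refine Fin.addCases (fun i => ?_) (fun j => ?_)
  · simp only [permOplus_castAdd, Fin.val_castAdd]
    have := (σ i).isLt
    omega
  · simp only [permOplus_natAdd, Fin.val_natAdd, Nat.add_lt_add_iff_left]
    exact h j

lemma IsDownCut.permOminus (σ : Equiv.Perm (Fin m)) {τ : Equiv.Perm (Fin n)} {c : ℕ}
    (h : IsDownCut τ c) : IsDownCut (permOminus σ τ) (m + c) := by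
  refine Fin.addCases (fun i => ?_) (fun j => ?_)
  · rw [val_permOminus_castAdd, Fin.val_castAdd]
    omega
  · rw [val_permOminus_natAdd, Fin.val_natAdd]
    have := h j
    omega

lemma boundedGaps_zero (g : ℕ) : BoundedGaps {0} 0 g := fun c hc =>
  ⟨0, rfl, 0, rfl, Nat.zero_le c, hc, le_rfl, Nat.zero_le _⟩

lemma exists_boundedGaps_isUpCut_listOplus {k : ℕ} :
    ∀ l : List PermSeq, (∀ σ ∈ l, σ.1 < k) →
      ∃ B : Set ℕ, BoundedGaps B (listOplus l).1 (k - 1) ∧ ∀ c ∈ B, IsUpCut (listOplus l).2 c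
  | [], _ => ⟨{0}, boundedGaps_zero _, fun _ hc => hc ▸ isUpCut_zero _⟩
  | σ :: l, hl => by
    obtain ⟨B, hB, hcut⟩ := exists_boundedGaps_isUpCut_listOplus l fun τ hτ => hl τ (.tail σ hτ)
    refine ⟨insert 0 ((σ.1 + ·) '' B), hB.shift (by have := hl σ (.head l); omega), ?_⟩
    rintro _ (rfl | ⟨c, hc, rfl⟩)
    exacts [isUpCut_zero _, (hcut c hc).permOplus σ.2]

lemma exists_boundedGaps_isDownCut_listOminus {k : ℕ} :
    ∀ l : List PermSeq, (∀ σ ∈ l, σ.1 < k) →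
      ∃ B : Set ℕ, BoundedGaps B (listOminus l).1 (k - 1) ∧ ∀ c ∈ B, IsDownCut (listOminus l).2 c
  | [], _ => ⟨{0}, boundedGaps_zero _, fun _ hc => hc ▸ isDownCut_zero _⟩
  | σ :: l, hl => by
    obtain ⟨B, hB, hcut⟩ := exists_boundedGaps_isDownCut_listOminus l fun τ hτ => hl τ (.tail σ hτ)
    refine ⟨insert 0 ((σ.1 + ·) '' B), hB.shift (by have := hl σ (.head l); omega), ?_⟩
    rintro _ (rfl | ⟨c, hc, rfl⟩)
    exacts [isDownCut_zero _, (hcut c hc).permOminus σ.2]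

lemma HUp.exists_boundedGaps_isUpCut {k : ℕ} {π : Equiv.Perm (Fin n)} (h : HUp k ⟨n, π⟩) :
    ∃ B : Set ℕ, BoundedGaps B n (k - 1) ∧ ∀ c ∈ B, IsUpCut π c := by
  obtain ⟨l, hl, heq⟩ := h
  have := exists_boundedGaps_isUpCut_listOplus l fun σ hσ => (hl σ hσ).2
  rw [← heq] at this
  exact this

lemma HDown.exists_boundedGaps_isDownCut {k : ℕ} {π : Equiv.Perm (Fin n)} (h : HDown k ⟨n, π⟩) :
    ∃ B : Set ℕ, BoundedGaps B n (k - 1) ∧ ∀ c ∈ B, IsDownCut π c := by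
  obtain ⟨l, hl, heq⟩ := h
  have := exists_boundedGaps_isDownCut_listOminus l fun σ hσ => (hl σ hσ).2
  rw [← heq] at this
  exact this

lemma exists_rank_eq_and_rank_apply_eq {X Y : Finset ℕ} (hX : #X = n) (hY : #Y = n)
    {f : ℕ → ℕ} (hf : Set.MapsTo f X Y) (π : Equiv.Perm (Fin n))
    (hπ : ∀ i j : Fin n, π i < π j ↔ f (X.orderIsoOfFin hX i) < f (X.orderIsoOfFin hX j))
    {x : ℕ} (hx : x ∈ X) : ∃ i : Fin n, rank X x = i ∧ rank Y (f x) = π i := by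
  have hfπ : (fun j => f (X.orderEmbOfFin hX (π.symm j))) = Y.orderEmbOfFin hY :=
    orderEmbOfFin_unique hY (fun j => hf (X.orderEmbOfFin_mem hX _)) fun j j' hjj' => by
      simpa using (hπ (π.symm j) (π.symm j')).1 (by simpa using hjj')
  obtain ⟨i, rfl⟩ : x ∈ Set.range (X.orderEmbOfFin hX) := by
    rwa [range_orderEmbOfFin, mem_coe]
  refine ⟨i, rank_orderEmbOfFin hX i, ?_⟩
  have := congrFun hfπ (π i)
  simp only [Equiv.symm_apply_apply] at this
  rw [this, rank_orderEmbOfFin]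

end Permutations

end IntervalRefinement

open IntervalRefinement

/-- Refinement lemma: if `f : X → Y` is a bijection between `n`-element subsets of `ℕ`
whose order-isomorphic permutation `π` lies in `H_k^+ ∪ H_k^-`, then every partition of `X`
into `r` intervals can be refined into at most `r + (k-1)(r-1)` intervals whose images under
`f` are intervals in `Y`, and every partition of `Y` into `r` intervals can be refined into
at most `r + (k-1)(r-1)` intervals whose preimages under `f` are intervals in `X`. -/
theorem interval_partition_refinement (n k : ℕ) (X Y : Finset ℕ)
    (hX : X.card = n) (hY : Y.card = n) (f : ℕ → ℕ) (hf : Set.BijOn f ↑X ↑Y)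
    (π : Equiv.Perm (Fin n))
    (hπ : ∀ i j : Fin n, π i < π j ↔ f ((X.orderIsoOfFin hX) i : ℕ) <
      f ((X.orderIsoOfFin hX) j : ℕ))
    (hH : HUp k ⟨n, π⟩ ∨ HDown k ⟨n, π⟩) :
    (∀ L : List (Finset ℕ), IsIntervalPartition X L →
      ∃ L' : List (Finset ℕ), IsIntervalPartition X L' ∧
        (∀ I ∈ L', ∃ J ∈ L, I ⊆ J) ∧
        L'.length ≤ L.length + (k - 1) * (L.length - 1) ∧
        ∀ I ∈ L', IsIntervalIn (I.image f) Y) ∧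
    (∀ L : List (Finset ℕ), IsIntervalPartition Y L →
      ∃ L' : List (Finset ℕ), IsIntervalPartition Y L' ∧
        (∀ I ∈ L', ∃ J ∈ L, I ⊆ J) ∧
        L'.length ≤ L.length + (k - 1) * (L.length - 1) ∧
        ∀ I ∈ L', IsIntervalIn (X.filter fun x => f x ∈ I) X) := by
  have hrank := fun x (hx : x ∈ X) => exists_rank_eq_and_rank_apply_eq hX hY hf.mapsTo π hπ hx
  rcases hH with hup | hdown
  · obtain ⟨B, hB, hcut⟩ := hup.exists_boundedGaps_isUpCut
    have hseg (d) (hd : d ∈ B) (d') (hd' : d' ∈ B) :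
        {x ∈ X | f x ∈ seg Y d d'} = seg X d d' :=
      filter_mem_seg_eq hf.mapsTo fun x hx => by
        obtain ⟨i, hxi, hfxi⟩ := hrank x hx
        have := hcut d hd i
        have := hcut d' hd' i
        omega
    exact ⟨fun L => exists_refinement_image hf.mapsTo hf.surjOn (hX ▸ hB)
        fun d hd d' hd' => ⟨d, d', hseg d hd d' hd'⟩,
      fun L => exists_refinement_preimage hf.injOn (hY ▸ hB)
        fun e he e' he' => ⟨e, e', hseg e he e' he'⟩⟩
  · obtain ⟨B, hB, hcut⟩ := hdown.exists_boundedGaps_isDownCut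
    have hseg (d) (hd : d ∈ B) (d') (hd' : d' ∈ B) :
        {x ∈ X | f x ∈ seg Y (n - d') (n - d)} = seg X d d' :=
      filter_mem_seg_eq hf.mapsTo fun x hx => by
        obtain ⟨i, hxi, hfxi⟩ := hrank x hx
        have := hcut d hd i
        have := hcut d' hd' i
        omega
    exact ⟨fun L => exists_refinement_image hf.mapsTo hf.surjOn (hX ▸ hB)
        fun d hd d' hd' => ⟨n - d', n - d, hseg d hd d' hd'⟩,
      fun L => exists_refinement_preimage (B := (n - ·) '' B) hf.injOn (hY ▸ hB.reflect) <| by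
        rintro _ ⟨d', hd', rfl⟩ _ ⟨d, hd, rfl⟩
        exact ⟨d, d', hseg d hd d' hd'⟩⟩
end

section
/- Let P and Q be sets of finite permutations such that P is finite and (Q, ≺) is a well partial order. Then (P[Q], ≺) is a well partial order, where P[Q] = {π[σ_1,...,σ_m] : m ≥ 1, π ∈ P ∩ S_m, σ_1,...,σ_m ∈ Q}. -/
/-- `(s, ≺)` is a well partial order: it has no infinite strictly descending chains and
no infinite antichains. -/
def IsWpoOn (s : Set PermSeq) : Prop :=
  (¬ ∃ f : ℕ → PermSeq, (∀ i, f i ∈ s) ∧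
      ∀ i, PermLE (f (i + 1)) (f i) ∧ f (i + 1) ≠ f i) ∧
  (¬ ∃ f : ℕ → PermSeq, (∀ i, f i ∈ s) ∧ ∀ i j, i ≠ j → ¬ PermLE (f i) (f j))

/-- The permutation order-isomorphic to a given sequence of (distinct) natural numbers,
presented as a list (one-line notation). -/
noncomputable def ofList (l : List ℕ) : PermSeq := ⟨l.length, (Tuple.sort l.get)⁻¹⟩

/-- One-line notation of the inflation `π[τ_1,…,τ_m]`: for each position `i` of `π` (from
the left) we write down the values of the block `τ_i`, shifted up by the total size of all
blocks `τ_{i'}` with `π i' < π i`; the `i`-th point of the graph of `π` is thus replaced by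
a downsized copy of the graph of `τ_i`. -/
def inflateList {m : ℕ} (π : Equiv.Perm (Fin m)) (τ : Fin m → PermSeq) : List ℕ :=
  (List.finRange m).flatMap fun i =>
    (List.finRange (τ i).1).map fun j =>
      (∑ i' ∈ Finset.univ.filter fun i' : Fin m => π i' < π i, (τ i').1) + ((τ i).2 j).val + 1

/-- The inflation `π[τ_1,…,τ_m]`. -/
noncomputable def inflate {m : ℕ} (π : Equiv.Perm (Fin m)) (τ : Fin m → PermSeq) : PermSeq :=
  ofList (inflateList π τ)

/-- `P[Q] = {π[σ_1,…,σ_m] : m ≥ 1, π ∈ P ∩ S_m, σ_i ∈ Q}`. -/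
noncomputable def inflateSet (P Q : Set PermSeq) : Set PermSeq :=
  {ρ | ∃ m : ℕ, 1 ≤ m ∧ ∃ π : Equiv.Perm (Fin m), (⟨m, π⟩ : PermSeq) ∈ P ∧
        ∃ τ : Fin m → PermSeq, (∀ i, τ i ∈ Q) ∧ ρ = inflate π τ}

/-!
Inflating a fixed `π` is monotone in the blocks: embeddings `τ i ≺ τ' i` assemble, block by
block, into an embedding `π[τ] ≺ π[τ']`, because values in different blocks compare as in `π`.
By Dickson's lemma the `m`-tuples over `Q` are well quasi-ordered pointwise, so for each `π ∈ P`
the set `{π[τ] : τ ∈ Qᵐ}` is a monotone image of a well quasi-order, and `P[Q]` lies in the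
finite union of these sets. Since containment is antisymmetric, being a well partial order in
the sense of `IsWpoOn` is the same as admitting no infinite bad sequence (Ramsey).
-/

open Set

theorem permLE_refl (σ : PermSeq) : PermLE σ σ :=
  ⟨id, strictMono_id, fun _ _ => Iff.rfl⟩

theorem permLE_trans {σ τ ρ : PermSeq} (h₁ : PermLE σ τ) (h₂ : PermLE τ ρ) :
    PermLE σ ρ := by
  obtain ⟨f, hf, hfπ⟩ := h₁
  obtain ⟨g, hg, hgπ⟩ := h₂
  exact ⟨g ∘ f, hg.comp hf, fun i j => (hfπ i j).trans (hgπ (f i) (f j))⟩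

instance : IsPreorder PermSeq PermLE where
  refl := permLE_refl
  trans _ _ _ := permLE_trans

theorem permLE_antisymm {σ τ : PermSeq} (h₁ : PermLE σ τ) (h₂ : PermLE τ σ) :
    σ = τ := by
  obtain ⟨m, π⟩ := σ
  obtain ⟨n, ρ⟩ := τ
  obtain ⟨f, hf, hfπ⟩ := h₁
  obtain ⟨g, hg, -⟩ := h₂
  obtain rfl : m = n := le_antisymm (Fin.le_of_injective f hf.injective)
    (Fin.le_of_injective g hg.injective)
  have hρπ : StrictMono (ρ ∘ π.symm) := fun a b hab => by
    simpa [hf.apply_eq] using (hfπ (π.symm a) (π.symm b)).1 (by simpa using hab)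
  have : ρ = π := Equiv.ext fun i => by simpa using congrFun hρπ.eq_id (π i)
  rw [this]

theorem isWpoOn_of_partiallyWellOrderedOn {s : Set PermSeq}
    (h : s.PartiallyWellOrderedOn PermLE) : IsWpoOn s := by
  refine ⟨fun ⟨f, hfs, hf⟩ => ?_, fun ⟨f, hfs, hf⟩ => ?_⟩
  · have : IsWellFounded s fun a b => PermLE a b ∧ ¬ PermLE b a := ⟨h.wellFoundedOn⟩
    obtain ⟨n, hn⟩ := WellFounded.not_rel_apply_succ
      (r := fun a b : s => PermLE a b ∧ ¬ PermLE b a) fun n => ⟨f n, hfs n⟩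
    exact hn ⟨(hf n).1, fun h' => (hf n).2 (permLE_antisymm (hf n).1 h')⟩
  · obtain ⟨m, n, hmn, hle⟩ := h.exists_lt hfs
    exact hf m n hmn.ne hle

theorem partiallyWellOrderedOn_of_isWpoOn {s : Set PermSeq} (h : IsWpoOn s) :
    s.PartiallyWellOrderedOn PermLE := by
  rw [partiallyWellOrderedOn_iff_exists_lt]
  intro f hfs
  by_contra! hbad
  obtain ⟨g, hdesc | hanti⟩ :=
    exists_increasing_or_nonincreasing_subseq' (fun a b => PermLE b a) f
  · refine h.1 ⟨f ∘ g, fun n => hfs _, fun n => ⟨hdesc n, fun heq => ?_⟩⟩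
    refine hbad _ _ (g.strictMono n.lt_succ_self) ?_
    rw [show f (g (n + 1)) = f (g n) from heq]
    exact permLE_refl _
  · refine h.2 ⟨f ∘ g, fun n => hfs _, fun m n hmn => ?_⟩
    rcases hmn.lt_or_gt with hlt | hlt
    · exact hbad _ _ (g.strictMono hlt)
    · exact hanti n m hlt

theorem isWpoOn_iff_partiallyWellOrderedOn {s : Set PermSeq} :
    IsWpoOn s ↔ s.PartiallyWellOrderedOn PermLE :=
  ⟨partiallyWellOrderedOn_of_isWpoOn, isWpoOn_of_partiallyWellOrderedOn⟩

theorem Set.Finite.partiallyWellOrderedOn_biUnion {ι α : Type*} {r : α → α → Prop}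
    {s : Set ι} {t : ι → Set α} (hs : s.Finite)
    (ht : ∀ i ∈ s, (t i).PartiallyWellOrderedOn r) :
    (⋃ i ∈ s, t i).PartiallyWellOrderedOn r := by
  induction s, hs using Set.Finite.induction_on with
  | empty => simp
  | @insert a s _ _ ih =>
    rw [Set.biUnion_insert]
    exact (ht a (mem_insert a s)).union (ih fun i hi => ht i (mem_insert_of_mem a hi))

open List in
theorem List.map_finRange_sublist_of_strictMono {m n : ℕ} {g : Fin m → Fin n}
    (hg : StrictMono g) : (finRange m).map g <+ finRange n := by
  rw [← ofFn_eq_map]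
  exact sublist_of_subperm_of_sortedLE
    (subperm_of_subset (nodup_ofFn.2 hg.injective) fun x _ => mem_finRange x)
    (sortedLT_ofFn_iff.2 hg).sortedLE (sortedLT_finRange n).sortedLE

theorem ofList_snd_lt_iff {l : List ℕ} (hl : l.Nodup) (i j : Fin l.length) :
    (ofList l).2 i < (ofList l).2 j ↔ l.get i < l.get j := by
  have hsort : StrictMono (l.get ∘ Tuple.sort l.get) :=
    (Tuple.monotone_sort l.get).strictMono_of_injective
      ((List.nodup_iff_injective_get.1 hl).comp (Equiv.injective _))
  conv_rhs =>
    rw [← (Tuple.sort l.get).apply_symm_apply i, ← (Tuple.sort l.get).apply_symm_apply j]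
  exact hsort.lt_iff_lt.symm

open List in
theorem permLE_ofList_of_map_sublist {α : Type*} {L : List α} {v w : α → ℕ} {l : List ℕ}
    (hv : (L.map v).Nodup) (hl : l.Nodup) (hw : L.map w <+ l)
    (hvw : ∀ x ∈ L, ∀ y ∈ L, v x < v y ↔ w x < w y) :
    PermLE (ofList (L.map v)) (ofList l) := by
  obtain ⟨f, hf⟩ := sublist_iff_exists_fin_orderEmbedding_get_eq.1 hw
  have hlen : (L.map v).length = (L.map w).length := by simp
  have hf' (i j : Fin (L.map v).length) :
      (L.map v).get i < (L.map v).get j ↔ l.get (f (i.cast hlen)) < l.get (f (j.cast hlen)) := by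
    have hi : (i : ℕ) < L.length := by simpa using i.isLt
    have hj : (j : ℕ) < L.length := by simpa using j.isLt
    rw [← hf, ← hf]
    simpa using hvw _ (L.getElem_mem hi) _ (L.getElem_mem hj)
  exact ⟨f ∘ Fin.cast hlen, f.strictMono.comp (Fin.cast_strictMono hlen), fun i j =>
    (ofList_snd_lt_iff hv i j).trans ((hf' i j).trans (ofList_snd_lt_iff hl _ _).symm)⟩

section Inflate

variable {m : ℕ} (π : Equiv.Perm (Fin m))

def blockShift (τ : Fin m → PermSeq) (i : Fin m) : ℕ :=
  ∑ i' ∈ Finset.univ.filter fun i' => π i' < π i, (τ i').1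

def inflateVal (τ : Fin m → PermSeq) (x : Σ i, Fin (τ i).1) : ℕ :=
  blockShift π τ x.1 + (τ x.1).2 x.2 + 1

/-- The positions of `π[τ]` from left to right, as pairs (block, position inside the block). -/
def inflatePoints (τ : Fin m → PermSeq) : List (Σ i, Fin (τ i).1) :=
  (List.finRange m).sigma fun i => List.finRange (τ i).1

theorem inflateList_eq_map (τ : Fin m → PermSeq) :
    inflateList π τ = (inflatePoints τ).map (inflateVal π τ) := by
  simp only [inflateList, inflatePoints, List.sigma, List.map_flatMap, List.map_map]
  rfl

theorem blockShift_add_le_of_lt (τ : Fin m → PermSeq) {i j : Fin m} (h : π i < π j) :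
    blockShift π τ i + (τ i).1 ≤ blockShift π τ j := by
  have hsub : insert i (Finset.univ.filter fun i' => π i' < π i) ⊆
      Finset.univ.filter fun i' => π i' < π j := by
    intro x hx
    simp only [Finset.mem_insert, Finset.mem_filter, Finset.mem_univ, true_and] at hx ⊢
    rcases hx with rfl | hx
    exacts [h, hx.trans h]
  have := Finset.sum_le_sum_of_subset (f := fun i' => (τ i').1) hsub
  rwa [Finset.sum_insert (by simp), add_comm] at this

theorem inflateVal_lt_of_lt (τ : Fin m → PermSeq) {i j : Fin m} (h : π i < π j)
    (a : Fin (τ i).1) (b : Fin (τ j).1) :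
    inflateVal π τ ⟨i, a⟩ < inflateVal π τ ⟨j, b⟩ := by
  have := blockShift_add_le_of_lt π τ h
  simp only [inflateVal]
  omega

theorem inflateVal_lt_inflateVal_iff (τ : Fin m → PermSeq) {i : Fin m} (a b : Fin (τ i).1) :
    inflateVal π τ ⟨i, a⟩ < inflateVal π τ ⟨i, b⟩ ↔ (τ i).2 a < (τ i).2 b := by
  simp only [inflateVal, add_lt_add_iff_right, add_lt_add_iff_left, Fin.val_fin_lt]

theorem inflateVal_injective (τ : Fin m → PermSeq) : Function.Injective (inflateVal π τ) := by
  rintro ⟨i, a⟩ ⟨j, b⟩ h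
  rcases lt_trichotomy (π i) (π j) with hij | hij | hij
  · exact absurd h (inflateVal_lt_of_lt π τ hij a b).ne
  · obtain rfl := π.injective hij
    have : (τ i).2 a = (τ i).2 b := by
      simp only [inflateVal] at h
      exact Fin.ext (by omega)
    rw [(τ i).2.injective this]
  · exact absurd h (inflateVal_lt_of_lt π τ hij b a).ne'

theorem inflateList_nodup (τ : Fin m → PermSeq) : (inflateList π τ).Nodup := by
  rw [inflateList_eq_map]
  exact ((List.nodup_finRange m).sigma fun i => List.nodup_finRange _).map
    (inflateVal_injective π τ)

open List in
theorem inflatePoints_map_sublist {τ τ' : Fin m → PermSeq}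
    {g : ∀ i, Fin (τ i).1 → Fin (τ' i).1} (hg : ∀ i, StrictMono (g i)) :
    (inflatePoints τ).map (fun x => ⟨x.1, g x.1 x.2⟩) <+ inflatePoints τ' := by
  simp only [inflatePoints, List.sigma, List.map_flatMap, List.map_map]
  refine Sublist.flatMap_right _ fun i _ => ?_
  have := (map_finRange_sublist_of_strictMono (hg i)).map
    (Sigma.mk (β := fun i => Fin (τ' i).1) i)
  rwa [List.map_map] at this

theorem inflateVal_lt_iff_of_blockwise {τ τ' : Fin m → PermSeq}
    {g : ∀ i, Fin (τ i).1 → Fin (τ' i).1}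
    (hg : ∀ i a b, (τ i).2 a < (τ i).2 b ↔ (τ' i).2 (g i a) < (τ' i).2 (g i b))
    (x y : Σ i, Fin (τ i).1) :
    inflateVal π τ x < inflateVal π τ y ↔
      inflateVal π τ' ⟨x.1, g x.1 x.2⟩ < inflateVal π τ' ⟨y.1, g y.1 y.2⟩ := by
  obtain ⟨i, a⟩ := x
  obtain ⟨j, b⟩ := y
  rcases lt_trichotomy (π i) (π j) with hij | hij | hij
  · exact iff_of_true (inflateVal_lt_of_lt π τ hij a b) (inflateVal_lt_of_lt π τ' hij _ _)
  · obtain rfl := π.injective hij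
    rw [inflateVal_lt_inflateVal_iff, inflateVal_lt_inflateVal_iff, hg]
  · exact iff_of_false (inflateVal_lt_of_lt π τ hij b a).not_gt
      (inflateVal_lt_of_lt π τ' hij _ _).not_gt

theorem inflate_mono {τ τ' : Fin m → PermSeq} (h : ∀ i, PermLE (τ i) (τ' i)) :
    PermLE (inflate π τ) (inflate π τ') := by
  choose g hg hgπ using h
  have hsub := (inflatePoints_map_sublist hg).map (inflateVal π τ')
  rw [List.map_map, ← inflateList_eq_map] at hsub
  have hnodup := inflateList_nodup π τ
  rw [inflateList_eq_map] at hnodup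
  rw [inflate, inflateList_eq_map π τ]
  exact permLE_ofList_of_map_sublist hnodup (inflateList_nodup π τ') hsub
    fun x _ y _ => inflateVal_lt_iff_of_blockwise π hgπ x y

end Inflate

theorem inflateSet_subset_biUnion (P Q : Set PermSeq) :
    inflateSet P Q ⊆ ⋃ p ∈ P, inflate p.2 '' univ.pi fun _ => Q := by
  rintro ρ ⟨m, -, π, hπ, τ, hτ, rfl⟩
  exact mem_biUnion hπ ⟨τ, fun i _ => hτ i, rfl⟩

/-- If `P` is a finite set of permutations and `(Q, ≺)` is a well partial order,
then `(P[Q], ≺)` is a well partial order. -/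
theorem inflateSet_wpo (P Q : Set PermSeq) (hP : P.Finite) (hQ : IsWpoOn Q) :
    IsWpoOn (inflateSet P Q) := by
  rw [isWpoOn_iff_partiallyWellOrderedOn] at hQ ⊢
  refine (hP.partiallyWellOrderedOn_biUnion fun p _ => ?_).mono (inflateSet_subset_biUnion P Q)
  exact (PartiallyWellOrderedOn.pi fun _ => hQ).image_of_monotone_on
    fun _ _ _ _ h => inflate_mono p.2 h
end

section
/- The set U = {μ_7, μ_9, μ_11, ...} is an antichain with respect to permutation containment ≺. Moreover, {123, 3214, 2143, 15432} ∪ U is an antichain with respect to ≺. -/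
/-- The permutation order-isomorphic to the sequence `f` (the standardization of `f`):
for injective `f`, it sends each position to the rank of its value. -/
noncomputable def toPerm {n : ℕ} (f : Fin n → ℕ) : Equiv.Perm (Fin n) := (Tuple.sort f)⁻¹

/-- One-line notation of the permutation `μ_{2k+5}` of Atkinson, Murphy and Ruškuc:
`2k+2, 2k+5, 2k+4`, then the interleaving `2k, 2k+3, 2k-2, 2k+1, …, 6, 9, 4, 7`,
then `1, 5, 3, 2` (e.g. `μ_7 = 4,7,6,1,5,3,2`). Positions are `0`-indexed here. -/
def muFun (k : ℕ) : Fin (2 * k + 5) → ℕ := fun i =>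
  if i.val = 0 then 2 * k + 2
  else if i.val = 1 then 2 * k + 5
  else if i.val = 2 then 2 * k + 4
  else if i.val = 2 * k + 1 then 1
  else if i.val = 2 * k + 2 then 5
  else if i.val = 2 * k + 3 then 3
  else if i.val = 2 * k + 4 then 2
  else if i.val % 2 = 1 then 2 * k - (i.val - 3)
  else 2 * k + 3 - (i.val - 4)

/-- The permutation `μ_{2k+5}`. -/
noncomputable def muPerm (k : ℕ) : Equiv.Perm (Fin (2 * k + 5)) := toPerm (muFun k)

/-- `μ_{2k+5}` as an element of `PermSeq`. -/
noncomputable def mu (k : ℕ) : PermSeq := ⟨2 * k + 5, muPerm k⟩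

/-- The infinite antichain `U = {μ_7, μ_9, μ_11, …}`. -/
noncomputable def Uset : Set PermSeq := {π | ∃ k : ℕ, 1 ≤ k ∧ π = mu k}

/-- The permutation `123`. -/
noncomputable def p123 : PermSeq := ⟨3, toPerm ![1, 2, 3]⟩

/-- The permutation `3214`. -/
noncomputable def p3214 : PermSeq := ⟨4, toPerm ![3, 2, 1, 4]⟩

/-- The permutation `2143`. -/
noncomputable def p2143 : PermSeq := ⟨4, toPerm ![2, 1, 4, 3]⟩

/-- The permutation `15432`. -/
noncomputable def p15432 : PermSeq := ⟨5, toPerm ![1, 5, 4, 3, 2]⟩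

/-!
Everything is read off the ascent graph of `μ_{2l+5}`: the pairs of positions `i < j` whose
entries increase, listed by `MuAscent`. An occurrence of a pattern sends ascents to ascents.

The entry `1` of `μ_{2l+5}` is, apart from position `0`, the only source of three ascents, so an
occurrence of `μ_{2k+5}` in `μ_{2l+5}` sends the entries `1, 5` of the final block to the
entries `1, 5`. The ascent `(p, p + 3)` from each odd position into the next pair then forces
the middle part onto a shift by `2 (l - k)`, and the ascent `(0, 4)` of `μ_{2k+5}` has no image
unless `k = l`. The four short permutations are excluded by local features of the graph: it
has no path of length two (`123`), no vertex with three sources (`3214`) or four targets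
(`15432`), and the later of two targets of a vertex is never reached from an earlier vertex
(`2143`). Among themselves they are compared by exhaustive search.
-/

theorem toPerm_lt_toPerm_iff {n : ℕ} {f : Fin n → ℕ} (hf : Function.Injective f)
    (i j : Fin n) : toPerm f i < toPerm f j ↔ f i < f j := by
  have hsort : StrictMono (f ∘ Tuple.sort f) :=
    (Tuple.monotone_sort f).strictMono_of_injective (hf.comp (Equiv.injective _))
  simpa [toPerm] using (hsort.lt_iff_lt (a := toPerm f i) (b := toPerm f j)).symm

theorem permContains_toPerm_iff {m n : ℕ} {g : Fin m → ℕ} {h : Fin n → ℕ}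
    (hg : Function.Injective g) (hh : Function.Injective h) :
    PermContains (toPerm g) (toPerm h) ↔
      ∃ f : Fin m → Fin n, StrictMono f ∧ ∀ i j, g i < g j ↔ h (f i) < h (f j) := by
  simp only [PermContains, toPerm_lt_toPerm_iff hg, toPerm_lt_toPerm_iff hh]

theorem PermLE.fst_le {σ τ : PermSeq} (h : PermLE σ τ) : σ.1 ≤ τ.1 := by
  obtain ⟨f, hf, -⟩ := h
  simpa using Fintype.card_le_of_injective f hf.injective

theorem not_permLE_mk_toPerm {m n : ℕ} {g : Fin m → ℕ} {h : Fin n → ℕ}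
    (hg : Function.Injective g) (hh : Function.Injective h)
    (H : ¬ ∃ f : Fin m → Fin n, (∀ i j, i < j → f i < f j) ∧
      ∀ i j, g i < g j ↔ h (f i) < h (f j)) :
    ¬ PermLE ⟨m, toPerm g⟩ ⟨n, toPerm h⟩ := fun hle =>
  H ((permContains_toPerm_iff hg hh).1 hle)

set_option maxRecDepth 100000 in
theorem isAntichain_small :
    IsAntichain PermLE ({p123, p3214, p2143, p15432} : Set PermSeq) := by
  rintro a (rfl | rfl | rfl | rfl) b (rfl | rfl | rfl | rfl) hne
  all_goals first
    | exact absurd rfl hne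
    | exact not_permLE_mk_toPerm (by decide) (by decide) (by decide)

def MuAscent (l i j : ℕ) : Prop :=
  i = 0 ∧ (j = 1 ∨ j = 2 ∨ j = 4) ∨
  i % 2 = 1 ∧ 3 ≤ i ∧ i < 2 * l ∧ (j = i + 1 ∨ j = i + 3) ∨
  i = 2 * l + 1 ∧ (j = 2 * l + 2 ∨ j = 2 * l + 3 ∨ j = 2 * l + 4)

theorem muFun_cases {l : ℕ} (i : Fin (2 * l + 5)) :
    i.val = 0 ∧ muFun l i = 2 * l + 2 ∨ i.val = 1 ∧ muFun l i = 2 * l + 5 ∨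
    i.val = 2 ∧ muFun l i = 2 * l + 4 ∨
    3 ≤ i.val ∧ i.val ≤ 2 * l ∧ i.val % 2 = 1 ∧ i.val + muFun l i = 2 * l + 3 ∨
    4 ≤ i.val ∧ i.val ≤ 2 * l ∧ i.val % 2 = 0 ∧ i.val + muFun l i = 2 * l + 7 ∨
    i.val = 2 * l + 1 ∧ muFun l i = 1 ∨ i.val = 2 * l + 2 ∧ muFun l i = 5 ∨
    i.val = 2 * l + 3 ∧ muFun l i = 3 ∨ i.val = 2 * l + 4 ∧ muFun l i = 2 := by
  have := i.isLt
  generalize hx : muFun l i = x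
  unfold muFun at hx
  -- choose the disjunct matching each branch: `omega` is very slow on the whole disjunction
  split_ifs at hx <;> repeat (first | (left; omega) | right)
  all_goals omega

theorem muFun_injective {l : ℕ} (hl : 1 ≤ l) : Function.Injective (muFun l) := by
  intro i j hij
  have := muFun_cases i
  have := muFun_cases j
  ext
  omega

theorem muFun_lt_muFun_iff {l : ℕ} (hl : 1 ≤ l) {i j : Fin (2 * l + 5)} (hij : i < j) :
    muFun l i < muFun l j ↔ MuAscent l i j := by
  have := muFun_cases i
  have := muFun_cases j
  have : i.val < j.val := hij
  unfold MuAscent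
  omega

theorem PermContains.exists_muAscent {m l : ℕ} {g : Fin m → ℕ} (hl : 1 ≤ l)
    (hg : Function.Injective g) (h : PermContains (toPerm g) (muPerm l)) :
    ∃ f : Fin m → Fin (2 * l + 5), StrictMono f ∧
      ∀ i j, i < j → g i < g j → MuAscent l (f i) (f j) := by
  obtain ⟨f, hf, hc⟩ := (permContains_toPerm_iff hg (muFun_injective hl)).1 h
  exact ⟨f, hf, fun i j hij hlt => (muFun_lt_muFun_iff hl (hf hij)).1 ((hc i j).1 hlt)⟩

namespace MuAscent

variable {l a b c d e : ℕ}

theorem not_chain (hl : 1 ≤ l) (hab : MuAscent l a b) (hbc : MuAscent l b c) : False := by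
  unfold MuAscent at hab hbc
  omega

theorem not_three_sources (had : MuAscent l a d) (hbd : MuAscent l b d) (hcd : MuAscent l c d)
    (hab : a < b) (hbc : b < c) : False := by
  unfold MuAscent at had hbd hcd
  omega

theorem not_shared_second_target (hl : 1 ≤ l) (had : MuAscent l a d) (hbc : MuAscent l b c)
    (hbd : MuAscent l b d) (hab : a < b) (hcd : c < d) : False := by
  unfold MuAscent at had hbc hbd
  omega

theorem not_four_targets (hab : MuAscent l a b) (hac : MuAscent l a c) (had : MuAscent l a d)
    (hae : MuAscent l a e) (hbc : b < c) (hcd : c < d) (hde : d < e) : False := by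
  unfold MuAscent at hab hac had hae
  omega

end MuAscent

section SmallPatterns

variable {l : ℕ}

theorem not_p123_le_mu (hl : 1 ≤ l) : ¬ PermLE p123 (mu l) := fun h => by
  obtain ⟨f, -, hasc⟩ := PermContains.exists_muAscent (g := ![1, 2, 3]) hl (by decide) h
  exact MuAscent.not_chain hl (hasc 0 1 (by decide) (by decide))
    (hasc 1 2 (by decide) (by decide))

theorem not_p3214_le_mu (hl : 1 ≤ l) : ¬ PermLE p3214 (mu l) := fun h => by
  obtain ⟨f, hf, hasc⟩ := PermContains.exists_muAscent (g := ![3, 2, 1, 4]) hl (by decide) h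
  exact MuAscent.not_three_sources (hasc 0 3 (by decide) (by decide))
    (hasc 1 3 (by decide) (by decide)) (hasc 2 3 (by decide) (by decide))
    (hf (by decide : (0 : Fin 4) < 1)) (hf (by decide : (1 : Fin 4) < 2))

theorem not_p2143_le_mu (hl : 1 ≤ l) : ¬ PermLE p2143 (mu l) := fun h => by
  obtain ⟨f, hf, hasc⟩ := PermContains.exists_muAscent (g := ![2, 1, 4, 3]) hl (by decide) h
  exact MuAscent.not_shared_second_target hl (hasc 0 3 (by decide) (by decide))
    (hasc 1 2 (by decide) (by decide)) (hasc 1 3 (by decide) (by decide))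
    (hf (by decide : (0 : Fin 4) < 1)) (hf (by decide : (2 : Fin 4) < 3))

theorem not_p15432_le_mu (hl : 1 ≤ l) : ¬ PermLE p15432 (mu l) := fun h => by
  obtain ⟨f, hf, hasc⟩ := PermContains.exists_muAscent (g := ![1, 5, 4, 3, 2]) hl (by decide) h
  exact MuAscent.not_four_targets (hasc 0 1 (by decide) (by decide))
    (hasc 0 2 (by decide) (by decide)) (hasc 0 3 (by decide) (by decide))
    (hasc 0 4 (by decide) (by decide)) (hf (by decide : (1 : Fin 5) < 2))
    (hf (by decide : (2 : Fin 5) < 3)) (hf (by decide : (3 : Fin 5) < 4))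

end SmallPatterns

/-- An occurrence of `μ_{2k+5}` in `μ_{2l+5}` as a map of positions, extended to all of `ℕ` so
that positions are plain numerals. -/
structure IsMuAscentMap (k l : ℕ) (F : ℕ → ℕ) : Prop where
  lt : ∀ {p q}, p < q → q < 2 * k + 5 → F p < F q
  ascent : ∀ {p q}, p < q → q < 2 * k + 5 → MuAscent k p q → MuAscent l (F p) (F q)

namespace IsMuAscentMap

variable {k l : ℕ} {F : ℕ → ℕ}

theorem apply_last_block (hF : IsMuAscentMap k l F) :
    F (2 * k + 1) = 2 * l + 1 ∧ F (2 * k + 2) = 2 * l + 2 := by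
  have h0 := hF.lt (p := 0) (q := 2 * k + 1) (by omega) (by omega)
  have h23 := hF.lt (p := 2 * k + 2) (q := 2 * k + 3) (by omega) (by omega)
  have h34 := hF.lt (p := 2 * k + 3) (q := 2 * k + 4) (by omega) (by omega)
  have a2 := hF.ascent (p := 2 * k + 1) (q := 2 * k + 2) (by omega) (by omega)
    (by unfold MuAscent; omega)
  have a3 := hF.ascent (p := 2 * k + 1) (q := 2 * k + 3) (by omega) (by omega)
    (by unfold MuAscent; omega)
  have a4 := hF.ascent (p := 2 * k + 1) (q := 2 * k + 4) (by omega) (by omega)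
    (by unfold MuAscent; omega)
  unfold MuAscent at a2 a3 a4
  omega

theorem apply_eq_shift (hF : IsMuAscentMap k l F) (hkl : k < l) {j : ℕ} (hj : 1 ≤ j)
    (hjk : j ≤ k) :
    F (2 * j + 1) = 2 * (j + l - k) + 1 ∧ F (2 * j + 2) = 2 * (j + l - k) + 2 := by
  induction hjk using Nat.decreasingInduction with
  | self =>
    rw [show k + l - k = l by omega]
    exact hF.apply_last_block
  | of_succ j hj' ih =>
    obtain ⟨h3, h4⟩ := ih (by omega)
    have h12 := hF.lt (p := 2 * j + 1) (q := 2 * j + 2) (by omega) (by omega)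
    have h23 := hF.lt (p := 2 * j + 2) (q := 2 * (j + 1) + 1) (by omega) (by omega)
    have a := hF.ascent (p := 2 * j + 1) (q := 2 * (j + 1) + 2) (by omega) (by omega)
      (by unfold MuAscent; omega)
    unfold MuAscent at a
    omega

end IsMuAscentMap

theorem not_isMuAscentMap {k l : ℕ} {F : ℕ → ℕ} (hk : 1 ≤ k) (hkl : k < l) :
    ¬ IsMuAscentMap k l F := by
  intro hF
  obtain ⟨h3, h4⟩ := hF.apply_eq_shift hkl le_rfl hk
  have h01 := hF.lt (p := 0) (q := 1) (by omega) (by omega)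
  have h12 := hF.lt (p := 1) (q := 2) (by omega) (by omega)
  have h23 := hF.lt (p := 2) (q := 2 * 1 + 1) (by omega) (by omega)
  have a := hF.ascent (p := 0) (q := 2 * 1 + 2) (by omega) (by omega) (by unfold MuAscent; omega)
  unfold MuAscent at a
  omega

theorem mu_not_le_mu {k l : ℕ} (hk : 1 ≤ k) (hkl : k < l) : ¬ PermLE (mu k) (mu l) := by
  intro h
  obtain ⟨f, hf, hasc⟩ := PermContains.exists_muAscent (by omega) (muFun_injective hk) h
  refine not_isMuAscentMap (F := fun p => if hp : p < 2 * k + 5 then f ⟨p, hp⟩ else 0)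
    hk hkl ⟨fun {p q} hpq hq => ?_, fun {p q} hpq hq ha => ?_⟩
  · simp only [dif_pos hq, dif_pos (hpq.trans hq)]
    exact hf hpq
  · simp only [dif_pos hq, dif_pos (hpq.trans hq)]
    exact hasc _ _ hpq ((muFun_lt_muFun_iff hk hpq).2 ha)

theorem isAntichain_Uset : IsAntichain PermLE Uset := by
  rintro _ ⟨k, hk, rfl⟩ _ ⟨l, hl, rfl⟩ hne h
  rcases lt_trichotomy k l with hkl | rfl | hlk
  · exact mu_not_le_mu hk hkl h
  · exact hne rfl
  · have := h.fst_le
    simp only [mu] at this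
    omega

/-- `U = {μ_7, μ_9, μ_11, …}` is an antichain under containment, and so is
`{123, 3214, 2143, 15432} ∪ U`. -/
theorem U_is_antichain :
    IsAntichain PermLE Uset ∧
    IsAntichain PermLE (({p123, p3214, p2143, p15432} : Set PermSeq) ∪ Uset) := by
  refine ⟨isAntichain_Uset, isAntichain_union.2 ⟨isAntichain_small, isAntichain_Uset, ?_⟩⟩
  rintro a ha _ ⟨l, hl, rfl⟩ -
  refine ⟨?_, fun h => ?_⟩
  · rcases ha with rfl | rfl | rfl | rfl
    exacts [not_p123_le_mu hl, not_p3214_le_mu hl, not_p2143_le_mu hl, not_p15432_le_mu hl]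
  · have := h.fst_le
    rcases ha with rfl | rfl | rfl | rfl <;>
      simp only [mu, p123, p3214, p2143, p15432] at this <;> omega
end

section
/- For every k ≥ 1, the graph G(μ_{2k+5}) is the double fork F_{2k+5}, i.e., the tree on 2k+5 vertices obtained from a path with 2k+3 vertices by appending a pendant vertex to its second vertex and a pendant vertex to its penultimate vertex. Consequently, since the double forks {F_i : i ≥ 6} form an antichain under the subgraph relation and π ≺ σ implies that G(π) is a subgraph of G(σ), the permutations μ_i form an antichain under ≺. -/
/-- The graph `G(π)` of a permutation: vertices are the points `(i, π i)` of the graph of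
`π` (identified with positions `i`), and two points are adjacent iff they form an ascent
pair (the left point is lower). -/
def permGraph {n : ℕ} (π : Equiv.Perm (Fin n)) : SimpleGraph (Fin n) :=
  SimpleGraph.fromRel fun i j => i < j ∧ π i < π j

/-- The double fork `F_i`: the tree on `i` vertices obtained from the path
`0 - 1 - ⋯ - (i-3)` (with `i-2` vertices) by appending the pendant vertex `i-2` to its
second vertex `1` and the pendant vertex `i-1` to its penultimate vertex `i-4`. -/
def doubleFork (i : ℕ) : SimpleGraph (Fin i) :=
  SimpleGraph.fromRel fun a b =>
    (a.val + 1 = b.val ∧ b.val ≤ i - 3) ∨ (a.val = 1 ∧ b.val = i - 2) ∨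
      (a.val = i - 4 ∧ b.val = i - 1)

/-- `G` is (isomorphic to) a subgraph of `H`. -/
def GraphSubgraph {V W : Type} (G : SimpleGraph V) (H : SimpleGraph W) : Prop :=
  ∃ f : V → W, Function.Injective f ∧ ∀ a b, G.Adj a b → H.Adj (f a) (f b)


/-! ### Auxiliary lemmas -/

section Helpers

set_option maxHeartbeats 1000000

def MuSpec (k x v : ℕ) : Prop :=
  (x = 0 ∧ v = 2 * k + 2) ∨ (x = 1 ∧ v = 2 * k + 5) ∨ (x = 2 ∧ v = 2 * k + 4) ∨
  (x = 2 * k + 1 ∧ v = 1) ∨ (x = 2 * k + 2 ∧ v = 5) ∨ (x = 2 * k + 3 ∧ v = 3) ∨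
  (x = 2 * k + 4 ∧ v = 2) ∨
  (x % 2 = 1 ∧ 3 ≤ x ∧ x ≤ 2 * k ∧ v + x = 2 * k + 3) ∨
  (x % 2 = 0 ∧ 4 ≤ x ∧ x ≤ 2 * k ∧ v + x = 2 * k + 7)

theorem muFun_spec (k : ℕ) (i : Fin (2 * k + 5)) : MuSpec k i.val (muFun k i) := by
  have hi := i.isLt
  simp only [muFun, MuSpec]
  split_ifs with h1 h2 h3 h4 h5 h6 h7 h8
  · exact .inl ⟨h1, rfl⟩
  · exact .inr (.inl ⟨h2, rfl⟩)
  · exact .inr (.inr (.inl ⟨h3, rfl⟩))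
  · exact .inr (.inr (.inr (.inl ⟨h4, rfl⟩)))
  · exact .inr (.inr (.inr (.inr (.inl ⟨h5, rfl⟩))))
  · exact .inr (.inr (.inr (.inr (.inr (.inl ⟨h6, rfl⟩)))))
  · exact .inr (.inr (.inr (.inr (.inr (.inr (.inl ⟨h7, rfl⟩))))))
  · exact .inr (.inr (.inr (.inr (.inr (.inr (.inr (.inl ⟨h8, by omega, by omega, by omega⟩)))))))
  · exact .inr (.inr (.inr (.inr (.inr (.inr (.inr (.inr ⟨by omega, by omega, by omega, by omega⟩)))))))

theorem muFun_inj (k : ℕ) (hk : 1 ≤ k) : Function.Injective (muFun k) := by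
  intro i j h
  have hik := i.isLt; have hjk := j.isLt
  have h1 := muFun_spec k i
  have h2 := muFun_spec k j
  ext
  simp only [MuSpec] at h1 h2
  generalize hA : muFun k i = a at h h1
  generalize hB : muFun k j = b at h h2
  omega

def ES (k x y : ℕ) : Prop :=
  (x = 0 ∧ (y = 1 ∨ y = 2 ∨ y = 4)) ∨
  (x % 2 = 1 ∧ 3 ≤ x ∧ x + 1 ≤ 2 * k ∧ (y = x + 1 ∨ y = x + 3)) ∨
  (x = 2 * k + 1 ∧ (y = 2 * k + 2 ∨ y = 2 * k + 3 ∨ y = 2 * k + 4))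

theorem ascent_iff (k : ℕ) (hk : 1 ≤ k) (x y : Fin (2 * k + 5)) :
    ((x < y ∧ muFun k x < muFun k y) ∨ (y < x ∧ muFun k y < muFun k x)) ↔
      (ES k x.val y.val ∨ ES k y.val x.val) := by
  have hx := x.isLt; have hy := y.isLt
  have h1 := muFun_spec k x
  have h2 := muFun_spec k y
  simp only [MuSpec] at h1 h2
  generalize hA : muFun k x = a at h1 ⊢
  generalize hB : muFun k y = b at h2 ⊢
  simp only [ES, Fin.lt_def]
  constructor
  · rintro (⟨hlt, hab⟩ | ⟨hlt, hab⟩) <;>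
      rcases h1 with h1|h1|h1|h1|h1|h1|h1|h1|h1 <;>
      rcases h2 with h2|h2|h2|h2|h2|h2|h2|h2|h2 <;>
      first
      | (exfalso; omega)
      | exact Or.inl (Or.inl ⟨by omega, by omega⟩)
      | exact Or.inl (Or.inr (Or.inl ⟨by omega, by omega, by omega, by omega⟩))
      | exact Or.inl (Or.inr (Or.inr ⟨by omega, by omega⟩))
      | exact Or.inr (Or.inl ⟨by omega, by omega⟩)
      | exact Or.inr (Or.inr (Or.inl ⟨by omega, by omega, by omega, by omega⟩))
      | exact Or.inr (Or.inr (Or.inr ⟨by omega, by omega⟩))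
  · intro hes
    rcases hes with (⟨h3,h4⟩|⟨h3,h4,h5,h6⟩|⟨h3,h4⟩)|(⟨h3,h4⟩|⟨h3,h4,h5,h6⟩|⟨h3,h4⟩) <;>
      first
      | exact Or.inl ⟨by omega, by omega⟩
      | exact Or.inr ⟨by omega, by omega⟩

def psiVal (k v : ℕ) : ℕ :=
  if v = 0 then 1 else if v = 1 then 0 else if v = 2 then 2 * k + 3
  else if v = 2 * k + 3 then 2 * k + 2 else if v = 2 * k + 4 then 2 * k + 4
  else if v % 2 = 0 then v - 2 else v

def PsiSpec (k v w : ℕ) : Prop :=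
  (v = 0 ∧ w = 1) ∨ (v = 1 ∧ w = 0) ∨ (v = 2 ∧ w = 2 * k + 3) ∨
  (v = 2 * k + 3 ∧ w = 2 * k + 2) ∨ (v = 2 * k + 4 ∧ w = 2 * k + 4) ∨
  (v % 2 = 0 ∧ 4 ≤ v ∧ v ≤ 2 * k + 2 ∧ w + 2 = v) ∨
  (v % 2 = 1 ∧ 3 ≤ v ∧ v ≤ 2 * k + 1 ∧ w = v)

theorem psiVal_spec (k v : ℕ) (hk : 1 ≤ k) (hv : v < 2 * k + 5) : PsiSpec k v (psiVal k v) := by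
  simp only [psiVal, PsiSpec]
  split_ifs with h1 h2 h3 h4 h5 h6
  · exact .inl ⟨h1, rfl⟩
  · exact .inr (.inl ⟨h2, rfl⟩)
  · exact .inr (.inr (.inl ⟨h3, rfl⟩))
  · exact .inr (.inr (.inr (.inl ⟨h4, rfl⟩)))
  · exact .inr (.inr (.inr (.inr (.inl ⟨h5, rfl⟩))))
  · exact .inr (.inr (.inr (.inr (.inr (.inl ⟨h6, by omega, by omega, by omega⟩)))))
  · exact .inr (.inr (.inr (.inr (.inr (.inr ⟨by omega, by omega, by omega, rfl⟩)))))

theorem psiVal_lt (k v : ℕ) (hk : 1 ≤ k) (hv : v < 2 * k + 5) : psiVal k v < 2 * k + 5 := by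
  have h := psiVal_spec k v hk hv
  simp only [PsiSpec] at h
  generalize psiVal k v = w at h
  omega

def DFrel (k x y : ℕ) : Prop :=
  (x + 1 = y ∧ y ≤ 2 * k + 2) ∨ (x = 1 ∧ y = 2 * k + 3) ∨ (x = 2 * k + 1 ∧ y = 2 * k + 4)

theorem psi_edge_iff (k v w pv pw : ℕ) (hk : 1 ≤ k) (hv : v < 2 * k + 5) (hw : w < 2 * k + 5)
    (h1 : PsiSpec k v pv) (h2 : PsiSpec k w pw) :
    (pv ≠ pw ∧ (DFrel k pv pw ∨ DFrel k pw pv)) ↔ (ES k v w ∨ ES k w v) := by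
  simp only [PsiSpec] at h1 h2
  simp only [DFrel, ES]
  constructor
  · rintro ⟨hne, (⟨h3,h4⟩|⟨h3,h4⟩|⟨h3,h4⟩)|(⟨h3,h4⟩|⟨h3,h4⟩|⟨h3,h4⟩)⟩ <;>
      rcases h1 with h1|h1|h1|h1|h1|h1|h1 <;>
      rcases h2 with h2|h2|h2|h2|h2|h2|h2 <;>
      first
      | (exfalso; omega)
      | exact Or.inl (Or.inl ⟨by omega, by omega⟩)
      | exact Or.inl (Or.inr (Or.inl ⟨by omega, by omega, by omega, by omega⟩))
      | exact Or.inl (Or.inr (Or.inr ⟨by omega, by omega⟩))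
      | exact Or.inr (Or.inl ⟨by omega, by omega⟩)
      | exact Or.inr (Or.inr (Or.inl ⟨by omega, by omega, by omega, by omega⟩))
      | exact Or.inr (Or.inr (Or.inr ⟨by omega, by omega⟩))
      | exact Or.inl (by omega)
      | exact Or.inr (by omega)
  · rintro ((⟨h3,h4⟩|⟨h3,h4,h5,h6|h6⟩|⟨h3,h4⟩)|(⟨h3,h4⟩|⟨h3,h4,h5,h6|h6⟩|⟨h3,h4⟩)) <;>
      rcases h1 with h1|h1|h1|h1|h1|h1|h1 <;>
      rcases h2 with h2|h2|h2|h2|h2|h2|h2 <;>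
      first
      | (exfalso; omega)
      | exact ⟨by omega, Or.inl (Or.inl ⟨by omega, by omega⟩)⟩
      | exact ⟨by omega, Or.inl (Or.inr (Or.inl ⟨by omega, by omega⟩))⟩
      | exact ⟨by omega, Or.inl (Or.inr (Or.inr ⟨by omega, by omega⟩))⟩
      | exact ⟨by omega, Or.inr (Or.inl ⟨by omega, by omega⟩)⟩
      | exact ⟨by omega, Or.inr (Or.inr (Or.inl ⟨by omega, by omega⟩))⟩
      | exact ⟨by omega, Or.inr (Or.inr (Or.inr ⟨by omega, by omega⟩))⟩
      | exact ⟨by omega, Or.inl (by omega)⟩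
      | exact ⟨by omega, Or.inr (by omega)⟩

theorem toPerm_lt_iff {n : ℕ} (f : Fin n → ℕ) (hf : Function.Injective f) (i j : Fin n) :
    toPerm f i < toPerm f j ↔ f i < f j := by
  have hm : StrictMono (f ∘ Tuple.sort f) :=
    (Tuple.monotone_sort f).strictMono_of_injective (hf.comp (Tuple.sort f).injective)
  have h1 : ∀ x, f x = (f ∘ Tuple.sort f) ((Tuple.sort f)⁻¹ x) := by intro x; simp
  rw [show toPerm f = (Tuple.sort f)⁻¹ from rfl, h1 i, h1 j, hm.lt_iff_lt]

theorem dfAdj (k : ℕ) (x y : Fin (2 * k + 5)) :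
    (doubleFork (2 * k + 5)).Adj x y ↔
      x.val ≠ y.val ∧ (DFrel k x.val y.val ∨ DFrel k y.val x.val) := by
  simp only [doubleFork, SimpleGraph.fromRel_adj, DFrel, Ne, Fin.ext_iff]
  omega

noncomputable def psiEquiv (k : ℕ) (hk : 1 ≤ k) : Fin (2 * k + 5) ≃ Fin (2 * k + 5) :=
  Equiv.ofBijective (fun v => ⟨psiVal k v.val, psiVal_lt k v.val hk v.isLt⟩) (by
    rw [Finite.injective_iff_bijective.symm]
    intro a b h
    have s1 := psiVal_spec k a.val hk a.isLt
    have s2 := psiVal_spec k b.val hk b.isLt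
    simp only [Fin.mk.injEq] at h
    simp only [PsiSpec] at s1 s2
    generalize hA : psiVal k a.val = pa at h s1
    generalize hB : psiVal k b.val = pb at h s2
    ext
    omega)

noncomputable def muIso (k : ℕ) (hk : 1 ≤ k) :
    permGraph (muPerm k) ≃g doubleFork (2 * k + 5) where
  toEquiv := psiEquiv k hk
  map_rel_iff' := by
    intro a b
    rw [dfAdj]
    have s1 := psiVal_spec k a.val hk a.isLt
    have s2 := psiVal_spec k b.val hk b.isLt
    have key := psi_edge_iff k a.val b.val _ _ hk a.isLt b.isLt s1 s2
    have hlt : ∀ i j, muPerm k i < muPerm k j ↔ muFun k i < muFun k j := by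
      intro i j
      exact toPerm_lt_iff (muFun k) (muFun_inj k hk) i j
    simp only [permGraph, SimpleGraph.fromRel_adj, psiEquiv, Equiv.ofBijective_apply, Ne,
      Fin.ext_iff, hlt]
    rw [ascent_iff k hk a b]
    constructor
    · rintro ⟨hne, hdf⟩
      have hes := key.mp ⟨hne, hdf⟩
      refine ⟨?_, hes⟩
      simp only [PsiSpec] at s1 s2
      generalize hA : psiVal k a.val = pa at hne s1
      generalize hB : psiVal k b.val = pb at hne s2
      omega
    · rintro ⟨hne, hes⟩
      exact key.mpr hes

theorem df_adj {j : ℕ} (x y : Fin j) :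
    (doubleFork j).Adj x y ↔ x.val ≠ y.val ∧
      (((x.val + 1 = y.val ∧ y.val ≤ j - 3) ∨ (x.val = 1 ∧ y.val = j - 2) ∨
        (x.val = j - 4 ∧ y.val = j - 1)) ∨
       ((y.val + 1 = x.val ∧ x.val ≤ j - 3) ∨ (y.val = 1 ∧ x.val = j - 2) ∨
        (y.val = j - 4 ∧ x.val = j - 1))) := by
  simp only [doubleFork, SimpleGraph.fromRel_adj, Ne, Fin.ext_iff]

theorem deg3 {j : ℕ} (hj : 6 ≤ j) (v u1 u2 u3 : Fin j)
    (h12 : u1 ≠ u2) (h13 : u1 ≠ u3) (h23 : u2 ≠ u3)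
    (a1 : (doubleFork j).Adj v u1) (a2 : (doubleFork j).Adj v u2)
    (a3 : (doubleFork j).Adj v u3) : v.val = 1 ∨ v.val = j - 4 := by
  rw [df_adj] at a1 a2 a3
  rw [Ne, Fin.ext_iff] at h12 h13 h23
  have := v.isLt; have := u1.isLt; have := u2.isLt; have := u3.isLt
  omega

def phiF (j : ℕ) (v : Fin j) : ℕ :=
  if v.val = j - 2 then 2 else if v.val = j - 1 then j - 5 else v.val

theorem phiF_step {j : ℕ} (hj : 6 ≤ j) (x y : Fin j) (h : (doubleFork j).Adj x y) :
    phiF j x ≤ phiF j y + 1 ∧ phiF j y ≤ phiF j x + 1 := by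
  rw [df_adj] at h
  have := x.isLt; have := y.isLt
  simp only [phiF]
  split_ifs <;> omega

set_option maxHeartbeats 2000000 in
theorem df_antichain (i j : ℕ) (hi : 6 ≤ i) (hj : 6 ≤ j) (hne : i ≠ j) :
    ¬ GraphSubgraph (doubleFork i) (doubleFork j) := by
  rintro ⟨f, finj, fadj⟩
  have hcard : i ≤ j := by
    have := Fintype.card_le_of_injective f finj
    simpa using this
  have hij : i < j := by omega
  have adjA : ∀ (s t : ℕ) (hs : s < i) (ht : t < i),
      (s ≠ t ∧ ((s + 1 = t ∧ t ≤ i - 3) ∨ (s = 1 ∧ t = i - 2) ∨ (s = i - 4 ∧ t = i - 1) ∨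
        (t + 1 = s ∧ s ≤ i - 3) ∨ (t = 1 ∧ s = i - 2) ∨ (t = i - 4 ∧ s = i - 1))) →
      (doubleFork i).Adj ⟨s, hs⟩ ⟨t, ht⟩ := by
    intro s t hs ht h
    rw [df_adj]
    simp only
    omega
  have fne : ∀ (s t : ℕ) (hs : s < i) (ht : t < i), s ≠ t → f ⟨s, hs⟩ ≠ f ⟨t, ht⟩ := by
    intro s t hs ht h hf
    exact h (by simpa [Fin.ext_iff] using congrArg Fin.val (finj hf))
  have hA : (f ⟨1, by omega⟩).val = 1 ∨ (f ⟨1, by omega⟩).val = j - 4 := by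
    refine deg3 hj (f ⟨1, by omega⟩) (f ⟨0, by omega⟩) (f ⟨2, by omega⟩) (f ⟨i-2, by omega⟩)
      (fne _ _ _ _ (by omega)) (fne _ _ _ _ (by omega)) (fne _ _ _ _ (by omega))
      (fadj _ _ (adjA _ _ _ _ (by omega))) (fadj _ _ (adjA _ _ _ _ (by omega)))
      (fadj _ _ (adjA _ _ _ _ (by omega)))
  have hB : (f ⟨i-4, by omega⟩).val = 1 ∨ (f ⟨i-4, by omega⟩).val = j - 4 := by
    refine deg3 hj _ (f ⟨i-5, by omega⟩) (f ⟨i-3, by omega⟩) (f ⟨i-1, by omega⟩)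
      (fne _ _ _ _ (by omega)) (fne _ _ _ _ (by omega)) (fne _ _ _ _ (by omega))
      (fadj _ _ (adjA _ _ _ _ (by omega))) (fadj _ _ (adjA _ _ _ _ (by omega)))
      (fadj _ _ (adjA _ _ _ _ (by omega)))
  have chain : ∀ (t : ℕ) (_ : t ≤ i - 5),
      phiF j (f ⟨t + 1, by omega⟩) ≤ phiF j (f ⟨1, by omega⟩) + t ∧
      phiF j (f ⟨1, by omega⟩) ≤ phiF j (f ⟨t + 1, by omega⟩) + t := by
    intro t
    induction t with
    | zero => intro _; exact ⟨Nat.le_add_right _ _, Nat.le_add_right _ _⟩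
    | succ t ih =>
      intro ht
      obtain ⟨ih1, ih2⟩ := ih (by omega)
      have hadj : (doubleFork i).Adj ⟨t + 1, by omega⟩ ⟨t + 2, by omega⟩ :=
        adjA _ _ (by omega) (by omega) (by omega)
      obtain ⟨s1, s2⟩ := phiF_step hj _ _ (fadj _ _ hadj)
      constructor <;> linarith
  have hc := chain (i - 5) (le_refl _)
  rw [show (⟨i - 5 + 1, by omega⟩ : Fin i) = ⟨i - 4, by omega⟩ from
    Fin.mk_eq_mk.mpr (by omega)] at hc
  have hphi : ∀ v : Fin j, (v.val = 1 ∨ v.val = j - 4) → phiF j v = v.val := by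
    intro v hv
    simp only [phiF]
    split_ifs <;> omega
  have e1 := hphi _ hA
  have e2 := hphi _ hB
  have hne2 : (f ⟨1, by omega⟩).val ≠ (f ⟨i-4, by omega⟩).val := by
    have := fne 1 (i-4) (by omega) (by omega) (by omega)
    rwa [Ne, Fin.ext_iff] at this
  generalize hX : phiF j (f ⟨1, by omega⟩) = X at hc e1
  generalize hY : phiF j (f ⟨i-4, by omega⟩) = Y at hc e2
  omega

theorem contains_sub {m n : ℕ} (π : Equiv.Perm (Fin m)) (σ : Equiv.Perm (Fin n))
    (h : PermContains π σ) : GraphSubgraph (permGraph π) (permGraph σ) := by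
  obtain ⟨f, hmono, hiff⟩ := h
  refine ⟨f, hmono.injective, ?_⟩
  intro a b hab
  simp only [permGraph, SimpleGraph.fromRel_adj] at hab ⊢
  obtain ⟨hne, h|h⟩ := hab
  · exact ⟨fun hf => hne (hmono.injective hf), Or.inl ⟨hmono.lt_iff_lt.mpr h.1, (hiff a b).mp h.2⟩⟩
  · exact ⟨fun hf => hne (hmono.injective hf), Or.inr ⟨hmono.lt_iff_lt.mpr h.1, (hiff b a).mp h.2⟩⟩

end Helpers

/-- For every `k ≥ 1` the graph `G(μ_{2k+5})` is the double fork `F_{2k+5}`; moreover the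
double forks `{F_i : i ≥ 6}` form an antichain under the subgraph relation, `π ≺ σ` implies
that `G(π)` is a subgraph of `G(σ)`, and consequently the permutations `μ_i` form an
antichain under containment. -/
theorem mu_graph_is_double_fork :
    (∀ k : ℕ, 1 ≤ k → Nonempty (permGraph (muPerm k) ≃g doubleFork (2 * k + 5))) ∧
    (∀ i j : ℕ, 6 ≤ i → 6 ≤ j → i ≠ j → ¬ GraphSubgraph (doubleFork i) (doubleFork j)) ∧
    (∀ (m n : ℕ) (π : Equiv.Perm (Fin m)) (σ : Equiv.Perm (Fin n)),
      PermContains π σ → GraphSubgraph (permGraph π) (permGraph σ)) ∧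
    IsAntichain PermLE Uset := by
  refine ⟨fun k hk => ⟨muIso k hk⟩, df_antichain, fun m n π σ h => contains_sub π σ h, ?_⟩
  rintro a ⟨k, hk, rfl⟩ b ⟨l, hl, rfl⟩ hne hle
  have hkl : k ≠ l := fun h => hne (by rw [h])
  have hsub : GraphSubgraph (permGraph (muPerm k)) (permGraph (muPerm l)) :=
    contains_sub _ _ hle
  have e1 := muIso k hk
  have e2 := muIso l hl
  obtain ⟨g, ginj, gadj⟩ := hsub
  have hsub2 : GraphSubgraph (doubleFork (2 * k + 5)) (doubleFork (2 * l + 5)) := by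
    refine ⟨fun v => e2 (g (e1.symm v)), ?_, ?_⟩
    · intro x y hxy
      have := ginj (e2.toEquiv.injective hxy)
      exact e1.symm.toEquiv.injective this
    · intro x y hxy
      have h1 : (permGraph (muPerm k)).Adj (e1.symm x) (e1.symm y) :=
        e1.symm.map_rel_iff.mpr hxy
      have h2 := gadj _ _ h1
      exact e2.map_rel_iff.mpr h2
  exact df_antichain _ _ (by omega) (by omega) (by omega) hsub2
end

section
/- Let t_n = |S_n(123, 3214, 2143)| be the number of permutations of {1,...,n} avoiding the patterns 123, 3214 and 2143. Then t_1 = 1, t_2 = 2, and t_n = 2t_{n-1} + t_{n-2} for n ≥ 3. -/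
/-- `ρ` avoids every permutation in `Y`. -/
def AvoidsAll (Y : Set PermSeq) (ρ : PermSeq) : Prop := ∀ π ∈ Y, ¬ PermLE π ρ

/-- The class `S(Y)` of all permutations containing no member of `Y`. -/
def SClass (Y : Set PermSeq) : Set PermSeq := {ρ | AvoidsAll Y ρ}

/-- `s_n = |S_n(123, 3214, 2143, 15432)|`. -/
noncomputable def sCount (n : ℕ) : ℕ :=
  {ρ : PermSeq | ρ.1 = n ∧ AvoidsAll {p123, p3214, p2143, p15432} ρ}.ncard

/-- `t_n = |S_n(123, 3214, 2143)|`. -/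
noncomputable def tCount (n : ℕ) : ℕ :=
  {ρ : PermSeq | ρ.1 = n ∧ AvoidsAll {p123, p3214, p2143} ρ}.ncard

/-!
The maximum `n - 1` of an avoider of `0, …, n - 1` with `n ≥ 3` lies among its first three
letters, since otherwise these letters followed by it form a `123` or a `3214`. In each pattern
the largest letter is preceded by two others, so a maximum at index `0` or `1` can be deleted and
reinserted freely: this accounts for `2 t_{n-1}` avoiders. A maximum at index `2` forces the first
letter to be `n - 2` (otherwise a `123` or a `2143` appears), and deleting both `n - 2` and `n - 1`
is a bijection onto the avoiders of length `n - 2`.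

Permutations are handled in one-line notation as lists of naturals, so that occurrences of a
pattern are sublists and deleting the maximum needs no relabelling.
-/

open List

theorem List.ofFn_sublist_ofFn_iff {α : Type*} {k n : ℕ} {g : Fin k → α} {h : Fin n → α} :
    ofFn g <+ ofFn h ↔ ∃ F : Fin k → Fin n, StrictMono F ∧ g = h ∘ F := by
  rw [sublist_iff_exists_fin_orderEmbedding_get_eq]
  constructor
  · rintro ⟨F, hF⟩
    refine ⟨fun i => Fin.cast length_ofFn (F (Fin.cast length_ofFn.symm i)),
      fun i j hij => F.strictMono hij, funext fun i => ?_⟩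
    simpa [Fin.cast] using hF (Fin.cast length_ofFn.symm i)
  · rintro ⟨F, hFm, rfl⟩
    refine ⟨OrderEmbedding.ofStrictMono
      (fun i => Fin.cast length_ofFn.symm (F (Fin.cast length_ofFn i))) fun i j hij => hFm hij,
      fun i => ?_⟩
    simp [Fin.cast]

theorem List.sublist_append_cons_iff {α : Type*} {s l₁ l₂ : List α} {x : α} :
    s <+ l₁ ++ x :: l₂ ↔
      s <+ l₁ ++ l₂ ∨ ∃ s₁ s₂, s = s₁ ++ x :: s₂ ∧ s₁ <+ l₁ ∧ s₂ <+ l₂ := by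
  simp only [sublist_append_iff, sublist_cons_iff]
  constructor
  · rintro ⟨s₁, s₂, rfl, h₁, h₂ | ⟨r, rfl, h₂⟩⟩
    · exact Or.inl ⟨s₁, s₂, rfl, h₁, h₂⟩
    · exact Or.inr ⟨s₁, r, rfl, h₁, h₂⟩
  · rintro (⟨s₁, s₂, rfl, h₁, h₂⟩ | ⟨s₁, s₂, rfl, h₁, h₂⟩)
    · exact ⟨s₁, s₂, rfl, h₁, Or.inl h₂⟩
    · exact ⟨s₁, x :: s₂, rfl, h₁, Or.inr ⟨s₂, rfl, h₂⟩⟩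

theorem List.cons_perm_range_succ_iff {n : ℕ} {l : List ℕ} :
    n :: l ~ range (n + 1) ↔ l ~ range n := by
  rw [range_succ]
  exact ((perm_append_singleton n (range n)).congr_right _).trans (perm_cons n)

namespace PatternAvoidance

section Patterns

variable {α : Type*} [LinearOrder α]

def Contains123 (l : List α) : Prop :=
  ∃ a b c, [a, b, c] <+ l ∧ a < b ∧ b < c

def Contains3214 (l : List α) : Prop :=
  ∃ a b c d, [a, b, c, d] <+ l ∧ c < b ∧ b < a ∧ a < d

def Contains2143 (l : List α) : Prop :=
  ∃ a b c d, [a, b, c, d] <+ l ∧ b < a ∧ a < d ∧ d < c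

def Avoids (l : List α) : Prop :=
  ¬Contains123 l ∧ ¬Contains3214 l ∧ ¬Contains2143 l

theorem Avoids.sublist {l l' : List α} (h : l <+ l') (hl' : Avoids l') : Avoids l :=
  ⟨fun ⟨a, b, c, hs, hp⟩ => hl'.1 ⟨a, b, c, hs.trans h, hp⟩,
    fun ⟨a, b, c, d, hs, hp⟩ => hl'.2.1 ⟨a, b, c, d, hs.trans h, hp⟩,
    fun ⟨a, b, c, d, hs, hp⟩ => hl'.2.2 ⟨a, b, c, d, hs.trans h, hp⟩⟩

theorem Avoids.of_length_le_two {l : List α} (hl : l.length ≤ 2) : Avoids l :=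
  ⟨fun ⟨_, _, _, hs, _⟩ => by have := hs.length_le; simp at this; omega,
    fun ⟨_, _, _, _, hs, _⟩ => by have := hs.length_le; simp at this; omega,
    fun ⟨_, _, _, _, hs, _⟩ => by have := hs.length_le; simp at this; omega⟩

/-- In each of the three patterns some letter after the first two exceeds both of them, so a new
maximum inserted at index `0` or `1` takes part in no occurrence. -/
theorem cons_cons_ne_append_cons {u v x z : α} {w s₁ s₂ : List α} (h₁ : s₁.length ≤ 1)
    (hx : ∀ y ∈ s₂, y < x) (hz : z ∈ w) (huz : u < z) (hvz : v < z) :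
    u :: v :: w ≠ s₁ ++ x :: s₂ := by
  intro hs
  match s₁, h₁ with
  | [], _ =>
    obtain ⟨rfl, rfl⟩ : u = x ∧ v :: w = s₂ := by simpa using hs
    exact lt_asymm (hx z (mem_cons_of_mem v hz)) huz
  | [_], _ =>
    obtain ⟨-, rfl, rfl⟩ := by simpa using hs
    exact lt_asymm (hx z hz) hvz

theorem avoids_append_cons_iff {x : α} {l₁ l₂ : List α} (h₁ : l₁.length ≤ 1)
    (hx : ∀ y ∈ l₂, y < x) : Avoids (l₁ ++ x :: l₂) ↔ Avoids (l₁ ++ l₂) := by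
  have split : ∀ {s}, s <+ l₁ ++ x :: l₂ → s <+ l₁ ++ l₂ ∨
      ∃ s₁ s₂, s = s₁ ++ x :: s₂ ∧ s₁.length ≤ 1 ∧ ∀ y ∈ s₂, y < x := by
    intro s hs
    rcases sublist_append_cons_iff.1 hs with hs | ⟨s₁, s₂, rfl, hs₁, hs₂⟩
    · exact Or.inl hs
    · exact Or.inr ⟨s₁, s₂, rfl, hs₁.length_le.trans h₁, fun y hy => hx y (hs₂.subset hy)⟩
  refine ⟨Avoids.sublist ((sublist_cons_self x l₂).append_left l₁), fun h => ⟨?_, ?_, ?_⟩⟩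
  · rintro ⟨a, b, c, hs, hab, hbc⟩
    rcases split hs with hs | ⟨s₁, s₂, hs, h₁, h₂⟩
    · exact h.1 ⟨a, b, c, hs, hab, hbc⟩
    · exact cons_cons_ne_append_cons h₁ h₂ (mem_singleton_self c) (hab.trans hbc) hbc hs
  · rintro ⟨a, b, c, d, hs, hcb, hba, had⟩
    rcases split hs with hs | ⟨s₁, s₂, hs, h₁, h₂⟩
    · exact h.2.1 ⟨a, b, c, d, hs, hcb, hba, had⟩
    · exact cons_cons_ne_append_cons h₁ h₂ (z := d) (by simp) had (hba.trans had) hs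
  · rintro ⟨a, b, c, d, hs, hba, had, hdc⟩
    rcases split hs with hs | ⟨s₁, s₂, hs, h₁, h₂⟩
    · exact h.2.2 ⟨a, b, c, d, hs, hba, had, hdc⟩
    · exact cons_cons_ne_append_cons h₁ h₂ (z := c) (by simp) (had.trans hdc)
        (hba.trans (had.trans hdc)) hs

theorem avoids_cons_cons_cons_iff {x y z : α} {l : List α} (hzy : z < y) (hyx : y < x)
    (hl : ∀ w ∈ l, w < y) : Avoids (y :: z :: x :: l) ↔ Avoids (y :: z :: l) := by
  have hx : ∀ w ∈ l, w < x := fun w hw => (hl w hw).trans hyx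
  have split : ∀ {s}, s <+ [y, z] ++ x :: l → s <+ y :: z :: l ∨
      (∃ s₁ s₂, s = s₁ ++ x :: s₂ ∧ s₁.length ≤ 1 ∧ ∀ w ∈ s₂, w < x) ∨
      ∃ s₂, s = y :: z :: x :: s₂ ∧ s₂ <+ l := by
    intro s hs
    rcases sublist_append_cons_iff.1 hs with hs | ⟨s₁, s₂, rfl, hs₁, hs₂⟩
    · exact Or.inl hs
    rcases hs₁.length_le.lt_or_eq with hlt | heq
    · exact Or.inr (Or.inl ⟨s₁, s₂, rfl, by simpa [Nat.lt_succ_iff] using hlt,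
        fun w hw => hx w (hs₂.subset hw)⟩)
    · exact Or.inr (Or.inr ⟨s₂, by rw [hs₁.eq_of_length heq]; rfl, hs₂⟩)
  refine ⟨Avoids.sublist (((sublist_cons_self x l).cons_cons z).cons_cons y),
    fun h => ⟨?_, ?_, ?_⟩⟩
  · rintro ⟨a, b, c, hs, hab, hbc⟩
    rcases split hs with hs | ⟨s₁, s₂, hs, h₁, h₂⟩ | ⟨s₂, hs, -⟩
    · exact h.1 ⟨a, b, c, hs, hab, hbc⟩
    · exact cons_cons_ne_append_cons h₁ h₂ (mem_singleton_self c) (hab.trans hbc) hbc hs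
    · obtain ⟨rfl, rfl, -⟩ := by simpa using hs
      exact lt_asymm hab hzy
  · rintro ⟨a, b, c, d, hs, hcb, hba, had⟩
    rcases split hs with hs | ⟨s₁, s₂, hs, h₁, h₂⟩ | ⟨s₂, hs, -⟩
    · exact h.2.1 ⟨a, b, c, d, hs, hcb, hba, had⟩
    · exact cons_cons_ne_append_cons h₁ h₂ (z := d) (by simp) had (hba.trans had) hs
    · obtain ⟨rfl, rfl, rfl, -⟩ := by simpa using hs
      exact lt_asymm hcb (hzy.trans hyx)
  · rintro ⟨a, b, c, d, hs, hba, had, hdc⟩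
    rcases split hs with hs | ⟨s₁, s₂, hs, h₁, h₂⟩ | ⟨s₂, hs, hs₂⟩
    · exact h.2.2 ⟨a, b, c, d, hs, hba, had, hdc⟩
    · exact cons_cons_ne_append_cons h₁ h₂ (z := c) (by simp) (had.trans hdc)
        (hba.trans (had.trans hdc)) hs
    · obtain ⟨rfl, -, -, rfl⟩ := by simpa using hs
      exact lt_asymm had (hl d (singleton_sublist.1 hs₂))

theorem Avoids.lt_or_lt_or_lt_of_mem {a b c x : α} {r : List α}
    (hl : Avoids (a :: b :: c :: r)) (hnd : (a :: b :: c :: r).Nodup) (hx : x ∈ r) :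
    x < a ∨ x < b ∨ x < c := by
  simp only [nodup_cons, mem_cons, not_or] at hnd
  obtain ⟨⟨hab, -, har⟩, ⟨hbc, hbr⟩, hcr, -⟩ := hnd
  by_contra! ⟨hax, hbx, hcx⟩
  replace hax := hax.lt_of_ne (ne_of_mem_of_not_mem hx har).symm
  replace hbx := hbx.lt_of_ne (ne_of_mem_of_not_mem hx hbr).symm
  replace hcx := hcx.lt_of_ne (ne_of_mem_of_not_mem hx hcr).symm
  rcases lt_or_gt_of_ne hab with hab | hba
  · exact hl.1 ⟨a, b, x, by simp [hx], hab, hbx⟩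
  rcases lt_or_gt_of_ne hbc with hbc | hcb
  · exact hl.1 ⟨b, c, x, by simp [hx], hbc, hcx⟩
  · exact hl.2.1 ⟨a, b, c, x, by simp [hx], hcb, hba, hax⟩

theorem Avoids.forall_lt_head {a b c : α} {r : List α} (hl : Avoids (a :: b :: c :: r))
    (hnd : (a :: b :: c :: r).Nodup) (hc : ∀ y ∈ a :: b :: r, y < c) :
    ∀ y ∈ b :: r, y < a := by
  simp only [nodup_cons, mem_cons, not_or] at hnd
  obtain ⟨⟨hab, -, har⟩, -⟩ := hnd
  have hba : b < a := (lt_or_gt_of_ne hab).resolve_left fun hab =>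
    hl.1 ⟨a, b, c, by simp, hab, hc b (by simp)⟩
  intro y hy
  rcases mem_cons.1 hy with rfl | hy
  · exact hba
  · by_contra! hay
    replace hay := hay.lt_of_ne (ne_of_mem_of_not_mem hy har).symm
    exact hl.2.2 ⟨a, b, c, y, by simp [hy], hba, hay, hc y (by simp [hy])⟩

end Patterns

def avoiders (n : ℕ) : Set (List ℕ) := {l | l ~ range n ∧ Avoids l}

def oneLine {n : ℕ} (σ : Equiv.Perm (Fin n)) : List ℕ := ofFn fun i => (σ i : ℕ)

theorem oneLine_injective (n : ℕ) : Function.Injective (oneLine (n := n)) := fun _ _ h =>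
  Equiv.ext fun i => Fin.ext (congrFun (ofFn_injective h) i)

theorem oneLine_perm_range {n : ℕ} (σ : Equiv.Perm (Fin n)) : oneLine σ ~ range n := by
  have hval : ofFn (Fin.val : Fin n → ℕ) = range n := ext_getElem (by simp) (by simp)
  exact hval ▸ σ.ofFn_comp_perm Fin.val

theorem exists_oneLine_eq_of_perm_range {n : ℕ} {l : List ℕ} (hl : l ~ range n) :
    ∃ σ : Equiv.Perm (Fin n), oneLine σ = l := by
  have hlen : l.length = n := by simpa using hl.length_eq
  have hnd : l.Nodup := hl.nodup_iff.2 nodup_range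
  let f : Fin n → Fin n := fun i => ⟨l[i.1], mem_range.1 (hl.subset (getElem_mem _))⟩
  have hf : Function.Injective f := fun i j h =>
    Fin.ext ((hnd.getElem_inj_iff).1 (congrArg Fin.val h))
  exact ⟨Equiv.ofBijective f (Finite.injective_iff_bijective.1 hf),
    ext_getElem (by simp [oneLine, hlen]) (by simp [oneLine, f])⟩

theorem toPerm_lt_toPerm_iff {k : ℕ} {p : Fin k → ℕ} (hp : Function.Injective p)
    {i j : Fin k} : toPerm p i < toPerm p j ↔ p i < p j := by
  have hmono : StrictMono (p ∘ Tuple.sort p) :=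
    (Tuple.monotone_sort p).strictMono_of_injective (hp.comp (Tuple.sort p).injective)
  simpa [toPerm] using
    (hmono.lt_iff_lt (a := (Tuple.sort p)⁻¹ i) (b := (Tuple.sort p)⁻¹ j)).symm

theorem permContains_toPerm_iff {k n : ℕ} {p : Fin k → ℕ} (hp : Function.Injective p)
    (σ : Equiv.Perm (Fin n)) : PermContains (toPerm p) σ ↔
      ∃ g : Fin k → ℕ, ofFn g <+ oneLine σ ∧ ∀ i j, p i < p j ↔ g i < g j := by
  simp only [PermContains, toPerm_lt_toPerm_iff hp, oneLine, ofFn_sublist_ofFn_iff]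
  constructor
  · rintro ⟨F, hF, h⟩
    exact ⟨fun i => σ (F i), ⟨F, hF, rfl⟩, h⟩
  · rintro ⟨g, ⟨F, hF, rfl⟩, h⟩
    exact ⟨F, hF, h⟩

theorem permContains_123_iff {n : ℕ} (σ : Equiv.Perm (Fin n)) :
    PermContains (toPerm ![1, 2, 3]) σ ↔ Contains123 (oneLine σ) := by
  rw [permContains_toPerm_iff (by decide)]
  constructor
  · rintro ⟨g, hs, hg⟩
    exact ⟨g 0, g 1, g 2, by simpa [ofFn_succ] using hs, (hg 0 1).1 (by decide),
      (hg 1 2).1 (by decide)⟩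
  · rintro ⟨a, b, c, hs, hab, hbc⟩
    refine ⟨![a, b, c], by simpa [ofFn_succ] using hs, ?_⟩
    intro i j
    fin_cases i <;> fin_cases j <;> simp <;> order

theorem permContains_3214_iff {n : ℕ} (σ : Equiv.Perm (Fin n)) :
    PermContains (toPerm ![3, 2, 1, 4]) σ ↔ Contains3214 (oneLine σ) := by
  rw [permContains_toPerm_iff (by decide)]
  constructor
  · rintro ⟨g, hs, hg⟩
    exact ⟨g 0, g 1, g 2, g 3, by simpa [ofFn_succ] using hs, (hg 2 1).1 (by decide),
      (hg 1 0).1 (by decide), (hg 0 3).1 (by decide)⟩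
  · rintro ⟨a, b, c, d, hs, hcb, hba, had⟩
    refine ⟨![a, b, c, d], by simpa [ofFn_succ] using hs, ?_⟩
    intro i j
    fin_cases i <;> fin_cases j <;> simp <;> order

theorem permContains_2143_iff {n : ℕ} (σ : Equiv.Perm (Fin n)) :
    PermContains (toPerm ![2, 1, 4, 3]) σ ↔ Contains2143 (oneLine σ) := by
  rw [permContains_toPerm_iff (by decide)]
  constructor
  · rintro ⟨g, hs, hg⟩
    exact ⟨g 0, g 1, g 2, g 3, by simpa [ofFn_succ] using hs, (hg 1 0).1 (by decide),
      (hg 0 3).1 (by decide), (hg 3 2).1 (by decide)⟩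
  · rintro ⟨a, b, c, d, hs, hba, had, hdc⟩
    refine ⟨![a, b, c, d], by simpa [ofFn_succ] using hs, ?_⟩
    intro i j
    fin_cases i <;> fin_cases j <;> simp <;> order

theorem avoidsAll_iff_avoids_oneLine {n : ℕ} (σ : Equiv.Perm (Fin n)) :
    AvoidsAll {p123, p3214, p2143} ⟨n, σ⟩ ↔ Avoids (oneLine σ) := by
  simp only [AvoidsAll, Set.forall_mem_insert, Set.mem_singleton_iff, forall_eq, PermLE, Avoids]
  rw [p123, p3214, p2143, permContains_123_iff, permContains_3214_iff, permContains_2143_iff]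

theorem tCount_eq_ncard_avoiders (n : ℕ) : tCount n = (avoiders n).ncard := by
  have hsigma : {ρ : PermSeq | ρ.1 = n ∧ AvoidsAll {p123, p3214, p2143} ρ} =
      (fun σ => (⟨n, σ⟩ : PermSeq)) '' {σ : Equiv.Perm (Fin n) | Avoids (oneLine σ)} := by
    ext ⟨k, σ⟩
    constructor
    · rintro ⟨rfl, h⟩
      exact ⟨σ, (avoidsAll_iff_avoids_oneLine σ).1 h, rfl⟩
    · rintro ⟨τ, hτ, h⟩
      cases h
      exact ⟨rfl, (avoidsAll_iff_avoids_oneLine τ).2 hτ⟩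
  have hlist : avoiders n = oneLine '' {σ : Equiv.Perm (Fin n) | Avoids (oneLine σ)} := by
    ext l
    constructor
    · rintro ⟨hl, ha⟩
      obtain ⟨σ, rfl⟩ := exists_oneLine_eq_of_perm_range hl
      exact ⟨σ, ha, rfl⟩
    · rintro ⟨σ, hσ, rfl⟩
      exact ⟨oneLine_perm_range σ, hσ⟩
  rw [tCount, hsigma, hlist]
  exact (Set.ncard_image_of_injective _ fun _ _ h => eq_of_heq (Sigma.mk.inj h).2).trans
    (Set.ncard_image_of_injective _ (oneLine_injective n)).symm

theorem lt_of_mem_avoiders {n y : ℕ} {l : List ℕ} (hl : l ∈ avoiders n) (hy : y ∈ l) :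
    y < n :=
  mem_range.1 (hl.1.subset hy)

theorem finite_avoiders (n : ℕ) : (avoiders n).Finite :=
  (range n).permutations.toFinset.finite_toSet.subset fun l hl => by simpa using hl.1

theorem ncard_avoiders_of_le_two {n : ℕ} (hn : n ≤ 2) : (avoiders n).ncard = n.factorial := by
  have : avoiders n = (range n).permutations.toFinset := by
    ext l
    simpa [avoiders] using fun hl => Avoids.of_length_le_two (hl.length_eq ▸ by simpa)
  rw [this, Set.ncard_coe_finset, toFinset_card_of_nodup (nodup_permutations _ nodup_range),
    length_permutations, length_range]

theorem cons_mem_avoiders_succ_iff {n : ℕ} {t : List ℕ} :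
    n :: t ∈ avoiders (n + 1) ↔ t ∈ avoiders n := by
  simp only [avoiders, Set.mem_ofPred_eq, cons_perm_range_succ_iff]
  exact and_congr_right fun hp =>
    avoids_append_cons_iff (l₁ := []) (by simp) fun y hy => mem_range.1 (hp.subset hy)

theorem cons_cons_mem_avoiders_succ_iff {n a : ℕ} {t : List ℕ} :
    a :: n :: t ∈ avoiders (n + 1) ↔ a :: t ∈ avoiders n := by
  simp only [avoiders, Set.mem_ofPred_eq, ((Perm.swap a n t).congr_left _).symm,
    cons_perm_range_succ_iff]
  exact and_congr_right fun hp =>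
    avoids_append_cons_iff (l₁ := [a]) le_rfl fun y hy => mem_range.1 (hp.subset (by simp [hy]))

theorem cons_cons_cons_mem_avoiders_add_three_iff {n a : ℕ} {t : List ℕ} :
    (n + 1) :: a :: (n + 2) :: t ∈ avoiders (n + 3) ↔ a :: t ∈ avoiders (n + 1) := by
  have hperm : (n + 1) :: a :: (n + 2) :: t ~ (n + 2) :: (n + 1) :: a :: t :=
    ((Perm.swap (n + 2) a t).cons _).trans (Perm.swap _ _ _)
  simp only [avoiders, Set.mem_ofPred_eq, hperm.congr_left, cons_perm_range_succ_iff]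
  refine and_congr_right fun hp => ?_
  have hlt : ∀ y ∈ a :: t, y < n + 1 := fun y hy => mem_range.1 (hp.subset hy)
  rw [avoids_cons_cons_cons_iff (hlt a (mem_cons_self ..)) (by omega)
    fun y hy => hlt y (mem_cons_of_mem a hy)]
  exact avoids_append_cons_iff (l₁ := []) (by simp) hlt

theorem exists_eq_of_mem_avoiders_add_three {m : ℕ} {l : List ℕ}
    (hl : l ∈ avoiders (m + 3)) :
    (∃ t, l = (m + 2) :: t) ∨ (∃ a t, l = a :: (m + 2) :: t) ∨
      ∃ a t, l = (m + 1) :: a :: (m + 2) :: t := by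
  have hmem : ∀ y, y ∈ l ↔ y < m + 3 := fun y => hl.1.mem_iff.trans mem_range
  have hnd : l.Nodup := hl.1.nodup_iff.2 nodup_range
  obtain ⟨a, b, c, r, rfl⟩ : ∃ a b c r, l = a :: b :: c :: r := by
    have hlen : l.length = m + 3 := by simpa using hl.1.length_eq
    match l, hlen with
    | a :: b :: c :: r, _ => exact ⟨a, b, c, r, rfl⟩
  have hmax := (hmem (m + 2)).2 (by omega)
  simp only [mem_cons] at hmax
  rcases hmax with rfl | rfl | rfl | hr
  · exact Or.inl ⟨_, rfl⟩
  · exact Or.inr (Or.inl ⟨_, _, rfl⟩)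
  · refine Or.inr (Or.inr ⟨b, r, ?_⟩)
    have hmid : a :: b :: (m + 2) :: r ~ (m + 2) :: a :: b :: r := perm_middle (l₁ := [a, b])
    have hc : ∀ y ∈ a :: b :: r, y < m + 2 := by
      intro y hy
      have := (hmem y).1 (hmid.symm.subset (mem_cons_of_mem _ hy))
      have : y ≠ m + 2 := by
        rintro rfl
        exact (nodup_cons.1 (hmid.nodup_iff.1 hnd)).1 hy
      omega
    have hsecond : m + 1 ∈ a :: b :: r := by simpa using (hmem (m + 1)).2 (by omega)
    rcases mem_cons.1 hsecond with h | h
    · rw [h]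
    · have := hl.2.forall_lt_head hnd hc _ h
      have := hc a (mem_cons_self ..)
      omega
  · have := (hmem a).1 (by simp)
    have := (hmem b).1 (by simp)
    have := (hmem c).1 (by simp)
    have := hl.2.lt_or_lt_or_lt_of_mem hnd hr
    omega

theorem exists_cons_of_mem_avoiders_succ {n : ℕ} {t : List ℕ} (ht : t ∈ avoiders (n + 1)) :
    ∃ a r, t = a :: r := by
  have hlen : t.length = n + 1 := by simpa using ht.1.length_eq
  match t, hlen with
  | a :: r, _ => exact ⟨a, r, rfl⟩

theorem avoiders_add_three (m : ℕ) :
    avoiders (m + 3) = (cons (m + 2)) '' avoiders (m + 2) ∪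
      (fun t => t.insertIdx 1 (m + 2)) '' avoiders (m + 2) ∪
      (fun t => (m + 1) :: t.insertIdx 1 (m + 2)) '' avoiders (m + 1) := by
  ext l
  constructor
  · intro hl
    rcases exists_eq_of_mem_avoiders_add_three hl with ⟨t, rfl⟩ | ⟨a, t, rfl⟩ | ⟨a, t, rfl⟩
    · exact Or.inl (Or.inl ⟨t, cons_mem_avoiders_succ_iff.1 hl, rfl⟩)
    · exact Or.inl (Or.inr ⟨a :: t, cons_cons_mem_avoiders_succ_iff.1 hl, rfl⟩)
    · exact Or.inr ⟨a :: t, cons_cons_cons_mem_avoiders_add_three_iff.1 hl, rfl⟩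
  · rintro ((⟨t, ht, rfl⟩ | ⟨t, ht, rfl⟩) | ⟨t, ht, rfl⟩)
    · exact cons_mem_avoiders_succ_iff.2 ht
    · obtain ⟨a, t, rfl⟩ := exists_cons_of_mem_avoiders_succ ht
      exact cons_cons_mem_avoiders_succ_iff.2 ht
    · obtain ⟨a, t, rfl⟩ := exists_cons_of_mem_avoiders_succ ht
      exact cons_cons_cons_mem_avoiders_add_three_iff.2 ht

theorem ncard_avoiders_add_three (m : ℕ) :
    (avoiders (m + 3)).ncard = 2 * (avoiders (m + 2)).ncard + (avoiders (m + 1)).ncard := by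
  have h01 : Disjoint ((cons (m + 2)) '' avoiders (m + 2))
      ((fun t => t.insertIdx 1 (m + 2)) '' avoiders (m + 2)) := by
    refine Set.disjoint_left.2 ?_
    rintro _ ⟨t, -, rfl⟩ ⟨t', ht', h⟩
    obtain ⟨a, t', rfl⟩ := exists_cons_of_mem_avoiders_succ ht'
    obtain ⟨rfl, -⟩ := by simpa using h
    exact lt_irrefl _ (lt_of_mem_avoiders ht' (mem_cons_self ..))
  have h2 : Disjoint ((cons (m + 2)) '' avoiders (m + 2) ∪
      (fun t => t.insertIdx 1 (m + 2)) '' avoiders (m + 2))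
      ((fun t => (m + 1) :: t.insertIdx 1 (m + 2)) '' avoiders (m + 1)) := by
    refine Set.disjoint_left.2 ?_
    rintro _ (⟨t, -, rfl⟩ | ⟨t, ht, rfl⟩) ⟨t', ht', h⟩
    · simp at h
    · obtain ⟨a, t, rfl⟩ := exists_cons_of_mem_avoiders_succ ht
      obtain ⟨a', t', rfl⟩ := exists_cons_of_mem_avoiders_succ ht'
      obtain ⟨-, rfl, -⟩ := by simpa using h
      exact lt_asymm (lt_of_mem_avoiders ht' (mem_cons_self ..)) (by omega)
  have hfin := finite_avoiders
  rw [avoiders_add_three, Set.ncard_union_eq h2 ((hfin _).image _ |>.union ((hfin _).image _))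
    ((hfin _).image _), Set.ncard_union_eq h01 ((hfin _).image _) ((hfin _).image _),
    Set.ncard_image_of_injective _ cons_injective,
    Set.ncard_image_of_injective _ (insertIdx_injective 1 _),
    Set.ncard_image_of_injective _ fun _ _ h => insertIdx_injective 1 (m + 2) (cons_injective h)]
  ring

end PatternAvoidance

open PatternAvoidance

/-- `t_1 = 1`, `t_2 = 2` and `t_n = 2t_{n-1} + t_{n-2}` for `n ≥ 3`. -/
theorem tCount_recurrence :
    tCount 1 = 1 ∧ tCount 2 = 2 ∧
    ∀ n : ℕ, 3 ≤ n → tCount n = 2 * tCount (n - 1) + tCount (n - 2) := by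
  simp only [tCount_eq_ncard_avoiders]
  refine ⟨ncard_avoiders_of_le_two (by norm_num), ncard_avoiders_of_le_two (by norm_num),
    fun n hn => ?_⟩
  obtain ⟨m, rfl⟩ := Nat.exists_eq_add_of_le' hn
  exact ncard_avoiders_add_three m
end
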